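/- arXiv:1508.02349 — 6 statements merged into one kernel-verified Lean document; each statement's English description precedes it below -/
import Mathlib

section
/- Let r ≥ 2 and d ≥ 1 be integers, and let K be a finite geometric simplicial complex. If there exists a continuous map f : |K| → ℝ^d with no r-Tverberg point, then there exists an S_r-equivariant continuous map F : K^r_Δ → S^{d(r−1)−1}. -/
/-!
The map `x ↦ (f(x_i) - (1/r) Σ_j f(x_j))_i` takes values in the zero-sum subspace of `(ℝ^d)^r`,
commutes with permutations of the coordinates, and vanishes exactly when all `f(x_i)` coincide.
On `K^r_Δ` a zero would therefore be an `r`-Tverberg point of `f`, so without Tverberg points the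
radial projection of this map onto the unit sphere of the zero-sum subspace is the required
equivariant map.
-/

open Set

noncomputable section

/-- `s` is a face of `K` containing `x` in its relative interior; i.e. `s` is the
support of `x` in `K`. -/
def IsSupportFace {n : ℕ} (K : Geometry.SimplicialComplex ℝ (EuclideanSpace ℝ (Fin n)))
    (x : EuclideanSpace ℝ (Fin n)) (s : Finset (EuclideanSpace ℝ (Fin n))) : Prop :=
  s ∈ K.faces ∧ x ∈ intrinsicInterior ℝ (convexHull ℝ (↑s : Set (EuclideanSpace ℝ (Fin n))))

/-- The continuous map `f : |K| → ℝ^d` has an `r`-Tverberg point: there are `r` points of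
`|K|` with pairwise (vertex-)disjoint supports mapped to the same point. -/
def HasTverbergPoint {n d : ℕ} (K : Geometry.SimplicialComplex ℝ (EuclideanSpace ℝ (Fin n)))
    (r : ℕ) (f : EuclideanSpace ℝ (Fin n) → EuclideanSpace ℝ (Fin d)) : Prop :=
  ∃ (x : Fin r → EuclideanSpace ℝ (Fin n)) (s : Fin r → Finset (EuclideanSpace ℝ (Fin n))),
    (∀ i, IsSupportFace K (x i) (s i)) ∧
    (Pairwise fun i j => Disjoint (s i) (s j)) ∧
    (∀ i j, f (x i) = f (x j))

/-- The `r`-fold deleted product `K^r_Δ` of `K`, as a subspace of `((ℝ^n))^r`. -/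
def deletedProduct {n : ℕ} (K : Geometry.SimplicialComplex ℝ (EuclideanSpace ℝ (Fin n)))
    (r : ℕ) : Set (Fin r → EuclideanSpace ℝ (Fin n)) :=
  {x | ∃ s : Fin r → Finset (EuclideanSpace ℝ (Fin n)),
    (∀ i, IsSupportFace K (x i) (s i)) ∧ Pairwise fun i j => Disjoint (s i) (s j)}

/-- The sphere `S^{d(r-1)-1} = {(y_1,…,y_r) ∈ (ℝ^d)^r : Σ y_i = 0, Σ ‖y_i‖² = 1}`. -/
def tvSphere (d r : ℕ) : Set (Fin r → EuclideanSpace ℝ (Fin d)) :=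
  {y | (∑ i, y i) = 0 ∧ (∑ i, ‖y i‖ ^ 2) = 1}

/-- There exists an `S_r`-equivariant continuous map `K^r_Δ → S^{d(r-1)-1}`. -/
def ExistsEquivariantMap {n : ℕ} (K : Geometry.SimplicialComplex ℝ (EuclideanSpace ℝ (Fin n)))
    (r d : ℕ) : Prop :=
  ∃ F : (Fin r → EuclideanSpace ℝ (Fin n)) → (Fin r → EuclideanSpace ℝ (Fin d)),
    ContinuousOn F (deletedProduct K r) ∧
    MapsTo F (deletedProduct K r) (tvSphere d r) ∧
    ∀ x ∈ deletedProduct K r, ∀ π : Equiv.Perm (Fin r),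
      F (fun i => x (π i)) = fun i => F x (π i)

open Finset

section Centering

variable {ι E : Type*} [Fintype ι] [AddCommGroup E] [Module ℝ E]

def centered (v : ι → E) : ι → E :=
  fun i => v i - (Fintype.card ι : ℝ)⁻¹ • ∑ j, v j

theorem sum_centered (v : ι → E) : ∑ i, centered v i = 0 := by
  rcases isEmpty_or_nonempty ι with hι | hι
  · simp
  have hcard : (Fintype.card ι : ℝ) ≠ 0 := by positivity
  simp only [centered, sum_sub_distrib, sum_const, card_univ, ← Nat.cast_smul_eq_nsmul ℝ,
    smul_smul, mul_inv_cancel₀ hcard, one_smul, sub_self]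

theorem eq_of_centered_eq_zero {v : ι → E} (h : centered v = 0) (i j : ι) : v i = v j := by
  have hv : ∀ k, v k = (Fintype.card ι : ℝ)⁻¹ • ∑ l, v l := fun k =>
    sub_eq_zero.mp (congrFun h k)
  rw [hv i, hv j]

theorem centered_comp_perm (v : ι → E) (π : Equiv.Perm ι) :
    centered (v ∘ π) = centered v ∘ π := by
  funext i
  simp only [centered, Function.comp_apply, Equiv.sum_comp π v]

theorem ContinuousOn.centered [TopologicalSpace E] [IsTopologicalAddGroup E]
    [ContinuousConstSMul ℝ E] {X : Type*} [TopologicalSpace X] {v : X → ι → E} {s : Set X}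
    (hv : ContinuousOn v s) : ContinuousOn (fun x => _root_.centered (v x)) s := by
  have hvi : ∀ i, ContinuousOn (fun x => v x i) s := continuousOn_pi.mp hv
  exact continuousOn_pi.mpr fun i =>
    (hvi i).sub ((continuousOn_finsetSum univ fun j _ => hvi j).const_smul _)

end Centering

section SumNormSq

variable {ι E : Type*} [Fintype ι] [NormedAddCommGroup E]

theorem sum_norm_sq_pos {y : ι → E} (hy : y ≠ 0) : 0 < ∑ i, ‖y i‖ ^ 2 := by
  obtain ⟨i, hi⟩ := Function.ne_iff.mp hy
  exact sum_pos' (fun j _ => by positivity) ⟨i, mem_univ i, by positivity⟩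

theorem sum_norm_sq_smul [NormedSpace ℝ E] (c : ℝ) (y : ι → E) :
    ∑ i, ‖(c • y) i‖ ^ 2 = c ^ 2 * ∑ i, ‖y i‖ ^ 2 := by
  simp only [Pi.smul_apply, norm_smul, mul_pow, Real.norm_eq_abs, sq_abs, mul_sum]

end SumNormSq

theorem existsEquivariantMap_of_nonvanishing {n d r : ℕ}
    {K : Geometry.SimplicialComplex ℝ (EuclideanSpace ℝ (Fin n))}
    (G : (Fin r → EuclideanSpace ℝ (Fin n)) → Fin r → EuclideanSpace ℝ (Fin d))
    (hG : ContinuousOn G (deletedProduct K r))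
    (hsum : ∀ x ∈ deletedProduct K r, ∑ i, G x i = 0)
    (hne : ∀ x ∈ deletedProduct K r, G x ≠ 0)
    (hequiv : ∀ x ∈ deletedProduct K r, ∀ π : Equiv.Perm (Fin r),
      G (fun i => x (π i)) = fun i => G x (π i)) :
    ExistsEquivariantMap K r d := by
  set N : (Fin r → EuclideanSpace ℝ (Fin n)) → ℝ := fun x => √(∑ i, ‖G x i‖ ^ 2)
  have hN : ∀ x ∈ deletedProduct K r, N x ≠ 0 := fun x hx =>
    (Real.sqrt_pos.mpr (sum_norm_sq_pos (hne x hx))).ne'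
  refine ⟨fun x => (N x)⁻¹ • G x, ?_, fun x hx => ⟨?_, ?_⟩, fun x hx π => ?_⟩
  · have hNc : ContinuousOn N (deletedProduct K r) :=
      (continuousOn_finsetSum _ fun i _ =>
        ((continuous_apply i).comp_continuousOn hG).norm.pow 2).sqrt
    exact (hNc.inv₀ hN).smul hG
  · simp only [Pi.smul_apply, ← smul_sum, hsum x hx, smul_zero]
  · rw [sum_norm_sq_smul, inv_pow, Real.sq_sqrt (sum_nonneg fun i _ => by positivity),
      inv_mul_cancel₀ (sum_norm_sq_pos (hne x hx)).ne']
  · have hNπ : N (fun i => x (π i)) = N x := by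
      simp only [N, hequiv x hx π, Equiv.sum_comp π fun i => ‖G x i‖ ^ 2]
    simp only [hNπ, hequiv x hx π]
    rfl

theorem mem_space_of_mem_deletedProduct {n r : ℕ}
    {K : Geometry.SimplicialComplex ℝ (EuclideanSpace ℝ (Fin n))}
    {x : Fin r → EuclideanSpace ℝ (Fin n)} (hx : x ∈ deletedProduct K r) (i : Fin r) :
    x i ∈ K.space := by
  obtain ⟨s, hs, -⟩ := hx
  exact K.convexHull_subset_space (hs i).1 (intrinsicInterior_subset (hs i).2)

theorem statement0_general (n d r : ℕ)
    (K : Geometry.SimplicialComplex ℝ (EuclideanSpace ℝ (Fin n)))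
    (f : EuclideanSpace ℝ (Fin n) → EuclideanSpace ℝ (Fin d))
    (hf : ContinuousOn f K.space)
    (hT : ¬ HasTverbergPoint K r f) :
    ExistsEquivariantMap K r d := by
  refine existsEquivariantMap_of_nonvanishing (fun x => centered (f ∘ x)) ?_
    (fun x _ => sum_centered _) ?_ (fun x _ π => centered_comp_perm (f ∘ x) π)
  · exact ContinuousOn.centered <| continuousOn_pi.mpr fun i =>
      hf.comp (continuous_apply i).continuousOn fun x hx => mem_space_of_mem_deletedProduct hx i
  · rintro x ⟨s, hs, hdisj⟩ hzero
    exact hT ⟨x, s, hs, hdisj, eq_of_centered_eq_zero hzero⟩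

/-- necessity of the deleted product criterion: if a finite geometric
simplicial complex `K` admits a continuous map `|K| → ℝ^d` with no `r`-Tverberg point, then
there is an `S_r`-equivariant continuous map `K^r_Δ → S^{d(r-1)-1}`. -/
theorem statement0 (n d r : ℕ) (hr : 2 ≤ r) (hd : 1 ≤ d)
    (K : Geometry.SimplicialComplex ℝ (EuclideanSpace ℝ (Fin n)))
    (hK : K.faces.Finite)
    (f : EuclideanSpace ℝ (Fin n) → EuclideanSpace ℝ (Fin d))
    (hf : ContinuousOn f K.space)
    (hT : ¬ HasTverbergPoint K r f) :
    ExistsEquivariantMap K r d :=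
  statement0_general n d r K f hf hT
end
end

section
/- Let r ≥ 2 and k ≥ 1, and let N = (rk+1)(r−1) and m = (r−1)k. Then there exists a map f : σ^N → ℝ^{rk} that is the restriction of an affine map such that all r-Tverberg points of f are of type {m}^r in the following sense: whenever x_1,…,x_r ∈ σ^N have pairwise disjoint supports and f(x_1) = … = f(x_r), each support supp(x_i) has cardinality exactly m + 1 = (r−1)k + 1. -/
/-!
The vertices of the simplex are grouped into a special group and `k` classes of `r - 1` groups,
each group consisting of `r` slots. The first `(r - 1) k` coordinates of the map record the
mass of the non-special groups; the remaining `k` coordinates, one per class `j`, add the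
position (slot index) of the mass in the special group to the mass sitting in slot `0` of the
groups of class `j`.

At a Tverberg point every group carries the same mass in every `x_i`, so disjointness of the
supports forces each `x_i` to occupy exactly one slot of every group with positive mass, the
`r` points using the `r` slots bijectively. If the special group has positive mass, the `x_i`
sit at pairwise distinct positions there, so for every class at most one `x_i` avoids slot `0` of
that class; as slot `0` of a group holds at most one `x_i`, all `r - 1` groups of the class are
used. If the special group had zero mass, all positions vanish, and since some `x_i` avoids
slot `0` of the class, no `x_i` uses it at all — impossible for a group with positive mass.
Hence all `(r - 1) k + 1` groups have positive mass, and each `x_i` occupies one slot in each.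
-/

open Finset

namespace TverbergType

def TverbergSupportsHaveCard {V E : Type*} [Fintype V] (f : (V → ℝ) → E) (r c : ℕ) : Prop :=
  ∀ x : Fin r → V → ℝ, (∀ i, x i ∈ stdSimplex ℝ V) →
    (Pairwise fun i j => Disjoint {a | 0 < x i a} {a | 0 < x j a}) →
    (∀ i j, f (x i) = f (x j)) → ∀ i, {a | 0 < x i a}.ncard = c

namespace TverbergSupportsHaveCard

variable {V V' E E' : Type*} [Fintype V] [Fintype V'] {f : (V → ℝ) → E} {r c : ℕ}

theorem comp_left (hf : TverbergSupportsHaveCard f r c) {g : E → E'} (hg : g.Injective) :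
    TverbergSupportsHaveCard (g ∘ f) r c :=
  fun x hx hdisj hfx => hf x hx hdisj fun i j => hg (hfx i j)

theorem comp_equiv (hf : TverbergSupportsHaveCard f r c) (e : V ≃ V') :
    TverbergSupportsHaveCard (fun z : V' → ℝ => f (z ∘ e)) r c := by
  intro x hx hdisj hfx i
  have hsupp : {a | 0 < x i a} = e.symm ⁻¹' {v | 0 < (x i ∘ e) v} := by
    ext a; simp
  rw [hsupp, Set.ncard_preimage_of_injective_subset_range e.symm.injective (by simp)]
  refine hf (fun i => x i ∘ e) (fun i => ?_) (fun i j hij => (hdisj hij).preimage e) hfx i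
  exact ⟨fun v => (hx i).1 (e v), (Equiv.sum_comp e (x i)).trans (hx i).2⟩

end TverbergSupportsHaveCard

theorem exists_equiv_mem_iff_of_pairwise_disjoint {α : Type*} [Finite α] {S : α → Set α}
    (hne : ∀ i, (S i).Nonempty) (hdisj : Pairwise fun i j => Disjoint (S i) (S j)) :
    ∃ σ : α ≃ α, ∀ i s, s ∈ S i ↔ σ i = s := by
  choose σ hσ using hne
  have hinj : σ.Injective := fun i j hij => by
    by_contra hne
    exact Set.disjoint_left.mp (hdisj hne) (hσ i) (hij ▸ hσ j)
  refine ⟨.ofBijective σ (Finite.injective_iff_bijective.mp hinj), fun i s => ⟨fun hs => ?_, ?_⟩⟩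
  · obtain ⟨j, rfl⟩ := Finite.injective_iff_surjective.mp hinj s
    by_contra hne
    exact Set.disjoint_left.mp (hdisj fun h => hne (congrArg σ h)) hs (hσ j)
  · rintro rfl
    exact hσ i

theorem eq_of_pos_of_pos {ι V : Type*} {y : ι → V → ℝ}
    (hdisj : Pairwise fun i j => Disjoint {v | 0 < y i v} {v | 0 < y j v}) {i j : ι} {v : V}
    (hi : 0 < y i v) (hj : 0 < y j v) : i = j := by
  by_contra hne
  exact Set.disjoint_left.mp (hdisj hne) hi hj

variable {κ : Type*} {n : ℕ}

/- A vertex is a pair `(g, s)` of a group `g` and a slot `s`; the group `none` is the special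
one, and `some (j, t)` is the `t`-th group of class `j`. -/

def groupMass (z : Option (κ × Fin n) × Fin (n + 1) → ℝ) (g : Option (κ × Fin n)) : ℝ :=
  ∑ s, z (g, s)

def position (z : Option (κ × Fin n) × Fin (n + 1) → ℝ) : ℝ :=
  ∑ s : Fin (n + 1), (s : ℝ) * z (none, s)

def colorSum (z : Option (κ × Fin n) × Fin (n + 1) → ℝ) (j : κ) : ℝ :=
  position z + ∑ t, z (some (j, t), 0)

variable (κ n) in
def tverbergMap : (Option (κ × Fin n) × Fin (n + 1) → ℝ) →ₗ[ℝ] ((κ × Fin n) ⊕ κ → ℝ) where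
  toFun z := Sum.elim (fun g => groupMass z (some g)) (colorSum z)
  map_add' z w := by
    ext (g | j) <;> simp [groupMass, colorSum, position, sum_add_distrib, mul_add]; ring
  map_smul' a z := by
    ext (g | j) <;> simp [groupMass, colorSum, position, mul_sum, mul_add, mul_left_comm]

section Mass

variable {z : Option (κ × Fin n) × Fin (n + 1) → ℝ} {g : Option (κ × Fin n)}

theorem sum_eq_groupMass_none_add [Fintype κ] :
    ∑ v, z v = groupMass z none + ∑ g, groupMass z (some g) := by
  rw [Fintype.sum_prod_type, Fintype.sum_option]
  rfl

theorem groupMass_nonneg (hz : ∀ v, 0 ≤ z v) : 0 ≤ groupMass z g :=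
  sum_nonneg fun s _ => hz (g, s)

theorem le_groupMass (hz : ∀ v, 0 ≤ z v) (s : Fin (n + 1)) : z (g, s) ≤ groupMass z g :=
  single_le_sum (fun s _ => hz (g, s)) (mem_univ s)

theorem eq_zero_of_groupMass_eq_zero (hz : ∀ v, 0 ≤ z v) (h : groupMass z g = 0)
    (s : Fin (n + 1)) : z (g, s) = 0 :=
  (sum_eq_zero_iff_of_nonneg fun s _ => hz (g, s)).mp h s (mem_univ s)

theorem groupMass_eq_apply {s₀ : Fin (n + 1)} (h : ∀ s, s ≠ s₀ → z (g, s) = 0) :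
    groupMass z g = z (g, s₀) :=
  sum_eq_single_of_mem s₀ (mem_univ s₀) fun s _ hs => h s hs

theorem colorSum_eq_of_forall_not_pos (hz : ∀ v, 0 ≤ z v) {j : κ}
    (h : ¬ ∃ t, 0 < z (some (j, t), 0)) :
    colorSum z j = position z := by
  push Not at h
  rw [colorSum, sum_eq_zero fun t _ => le_antisymm (h t) (hz _), add_zero]

end Mass

section TverbergPoint

variable {y : Fin (n + 1) → Option (κ × Fin n) × Fin (n + 1) → ℝ}

theorem groupMass_eq_of_tverbergMap_eq [Fintype κ] (hsum : ∀ i, ∑ v, y i v = 1)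
    (hmap : ∀ i j, tverbergMap κ n (y i) = tverbergMap κ n (y j)) (i j : Fin (n + 1))
    (g : Option (κ × Fin n)) : groupMass (y i) g = groupMass (y j) g := by
  have hsome : ∀ g, groupMass (y i) (some g) = groupMass (y j) (some g) :=
    fun g => congrFun (hmap i j) (.inl g)
  cases g with
  | some g => exact hsome g
  | none =>
    have h := (hsum i).trans (hsum j).symm
    rw [sum_eq_groupMass_none_add, sum_eq_groupMass_none_add, Fintype.sum_congr _ _ hsome] at h
    linarith

theorem exists_slotEquiv (hnonneg : ∀ i v, 0 ≤ y i v)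
    (hdisj : Pairwise fun i j => Disjoint {v | 0 < y i v} {v | 0 < y j v})
    {g : Option (κ × Fin n)} (hg : ∀ i, 0 < groupMass (y i) g) :
    ∃ σ : Fin (n + 1) ≃ Fin (n + 1), ∀ i s, 0 < y i (g, s) ↔ σ i = s := by
  refine exists_equiv_mem_iff_of_pairwise_disjoint (S := fun i => {s | 0 < y i (g, s)})
    (fun i => ?_) fun i j hij => (hdisj hij).preimage (Prod.mk g)
  obtain ⟨s, -, hs⟩ := (sum_pos_iff_of_nonneg fun s _ => hnonneg i (g, s)).mp (hg i)
  exact ⟨s, hs⟩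

theorem card_filter_exists_pos_le (hnonneg : ∀ i v, 0 ≤ y i v)
    (hdisj : Pairwise fun i j => Disjoint {v | 0 < y i v} {v | 0 < y j v})
    (hmass : ∀ i j g, groupMass (y i) g = groupMass (y j) g) (j : κ) :
    #{i | ∃ t, 0 < y i (some (j, t), 0)} ≤ #{t | 0 < groupMass (y 0) (some (j, t))} := by
  classical
  calc #{i | ∃ t, 0 < y i (some (j, t), 0)}
      ≤ #(({t | 0 < groupMass (y 0) (some (j, t))} : Finset (Fin n)).biUnion
          fun t => {i | 0 < y i (some (j, t), 0)}) := by
        refine card_le_card fun i hi => ?_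
        obtain ⟨t, ht⟩ := (mem_filter.mp hi).2
        refine mem_biUnion.mpr ⟨t, mem_filter.mpr ⟨mem_univ t, ?_⟩, mem_filter.mpr ⟨mem_univ i, ht⟩⟩
        exact hmass i 0 _ ▸ ht.trans_le (le_groupMass (hnonneg i) 0)
    _ ≤ ∑ t ∈ {t | 0 < groupMass (y 0) (some (j, t))}, #{i | 0 < y i (some (j, t), 0)} :=
        card_biUnion_le
    _ ≤ ∑ t ∈ {t | 0 < groupMass (y 0) (some (j, t))}, 1 :=
        sum_le_sum fun t _ => card_le_one.mpr fun a ha b hb =>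
          eq_of_pos_of_pos hdisj (mem_filter.mp ha).2 (mem_filter.mp hb).2
    _ = #{t | 0 < groupMass (y 0) (some (j, t))} := by simp

theorem injective_position (hnonneg : ∀ i v, 0 ≤ y i v)
    (hdisj : Pairwise fun i j => Disjoint {v | 0 < y i v} {v | 0 < y j v})
    (hmass : ∀ i j g, groupMass (y i) g = groupMass (y j) g)
    (hnone : 0 < groupMass (y 0) none) :
    Function.Injective fun i => position (y i) := by
  obtain ⟨σ, hσ⟩ := exists_slotEquiv hnonneg hdisj fun i => hmass 0 i none ▸ hnone
  have hzero : ∀ i s, s ≠ σ i → y i (none, s) = 0 := fun i s hs =>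
    le_antisymm (not_lt.mp fun h => hs ((hσ i s).mp h).symm) (hnonneg i _)
  have hpos : ∀ i, position (y i) = (σ i : ℝ) * groupMass (y 0) none := fun i => by
    rw [position, sum_eq_single (σ i) (fun s _ hs => by rw [hzero i s hs, mul_zero]) (by simp),
      hmass 0 i, groupMass_eq_apply (hzero i)]
  intro i j hij
  simp only [hpos, mul_left_inj' hnone.ne', Nat.cast_inj] at hij
  exact σ.injective (Fin.ext hij)

theorem groupMass_some_pos (hnonneg : ∀ i v, 0 ≤ y i v)
    (hdisj : Pairwise fun i j => Disjoint {v | 0 < y i v} {v | 0 < y j v})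
    (hmass : ∀ i j g, groupMass (y i) g = groupMass (y j) g)
    (hcolor : ∀ i j c, colorSum (y i) c = colorSum (y j) c)
    (hnone : 0 < groupMass (y 0) none) (j : κ) (t : Fin n) :
    0 < groupMass (y 0) (some (j, t)) := by
  classical
  have hidle : #{i | ¬ ∃ t, 0 < y i (some (j, t), 0)} ≤ 1 :=
    card_le_one.mpr fun a ha b hb => injective_position hnonneg hdisj hmass hnone <| by
      simp only [← colorSum_eq_of_forall_not_pos (hnonneg _) (mem_filter.mp ha).2,
        ← colorSum_eq_of_forall_not_pos (hnonneg _) (mem_filter.mp hb).2, hcolor a b]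
  have hactive : #{t | 0 < groupMass (y 0) (some (j, t))} = Fintype.card (Fin n) := by
    refine le_antisymm (card_le_univ _) ?_
    have := card_filter_exists_pos_le hnonneg hdisj hmass j
    have := card_filter_add_card_filter_not (s := univ)
      fun i : Fin (n + 1) => ∃ t, 0 < y i (some (j, t), 0)
    simp only [card_univ, Fintype.card_fin] at *
    omega
  simpa using eq_univ_iff_forall.mp (eq_univ_of_card _ hactive) t

theorem slot_zero_eq_zero_of_position_eq (hnonneg : ∀ i v, 0 ≤ y i v)
    (hdisj : Pairwise fun i j => Disjoint {v | 0 < y i v} {v | 0 < y j v})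
    (hmass : ∀ i j g, groupMass (y i) g = groupMass (y j) g)
    (hcolor : ∀ i j c, colorSum (y i) c = colorSum (y j) c)
    (hposition : ∀ i j, position (y i) = position (y j))
    (i : Fin (n + 1)) (j : κ) (t : Fin n) : y i (some (j, t), 0) = 0 := by
  classical
  obtain ⟨i₀, hi₀⟩ : ∃ i₀, ¬ ∃ t, 0 < y i₀ (some (j, t), 0) := by
    by_contra! hall
    have := card_filter_exists_pos_le hnonneg hdisj hmass j
    rw [filter_true_of_mem fun i _ => hall i, card_univ, Fintype.card_fin] at this
    have := this.trans (card_le_univ _)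
    simp at this
  have h := hcolor i i₀ j
  rw [colorSum_eq_of_forall_not_pos (hnonneg i₀) hi₀, ← hposition i i₀, colorSum,
    add_eq_left] at h
  exact (sum_eq_zero_iff_of_nonneg fun t _ => hnonneg i _).mp h t (mem_univ t)

theorem groupMass_none_pos [Fintype κ] (hnonneg : ∀ i v, 0 ≤ y i v)
    (hsum : ∀ i, ∑ v, y i v = 1)
    (hdisj : Pairwise fun i j => Disjoint {v | 0 < y i v} {v | 0 < y j v})
    (hmass : ∀ i j g, groupMass (y i) g = groupMass (y j) g)
    (hcolor : ∀ i j c, colorSum (y i) c = colorSum (y j) c) :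
    0 < groupMass (y 0) none := by
  by_contra hnotpos
  have hnone : groupMass (y 0) none = 0 :=
    le_antisymm (not_lt.mp hnotpos) (groupMass_nonneg (hnonneg 0))
  have hzero : ∀ i s, y i (none, s) = 0 := fun i =>
    eq_zero_of_groupMass_eq_zero (hnonneg i) (hmass i 0 none ▸ hnone)
  have hslot := slot_zero_eq_zero_of_position_eq hnonneg hdisj hmass hcolor
    fun i j => by simp [position, hzero]
  obtain ⟨g, hg⟩ : ∃ g, 0 < groupMass (y 0) (some g) := by
    have h := hsum 0
    rw [sum_eq_groupMass_none_add, hnone, zero_add] at h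
    by_contra! hall
    linarith [sum_nonpos fun g (_ : g ∈ univ) => hall g]
  obtain ⟨σ, hσ⟩ := exists_slotEquiv hnonneg hdisj fun i => hmass 0 i (some g) ▸ hg
  have h := (hσ (σ.symm 0) 0).mpr (σ.apply_symm_apply 0)
  rw [hslot] at h
  exact h.false

theorem ncard_support_eq [Fintype κ] (hnonneg : ∀ i v, 0 ≤ y i v)
    (hsum : ∀ i, ∑ v, y i v = 1)
    (hdisj : Pairwise fun i j => Disjoint {v | 0 < y i v} {v | 0 < y j v})
    (hmass : ∀ i j g, groupMass (y i) g = groupMass (y j) g)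
    (hcolor : ∀ i j c, colorSum (y i) c = colorSum (y j) c) (i : Fin (n + 1)) :
    {v | 0 < y i v}.ncard = Fintype.card κ * n + 1 := by
  have hnone := groupMass_none_pos hnonneg hsum hdisj hmass hcolor
  have hpos : ∀ g i, 0 < groupMass (y i) g := by
    rintro (_ | ⟨j, t⟩) i <;> rw [hmass i 0]
    exacts [hnone, groupMass_some_pos hnonneg hdisj hmass hcolor hnone j t]
  choose σ hσ using fun g => exists_slotEquiv hnonneg hdisj (hpos g)
  have hsupp : {v | 0 < y i v} = Set.range fun g => (g, σ g i) := by
    ext ⟨g, s⟩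
    simp [hσ, eq_comm]
  rw [hsupp, Set.ncard_range_of_injective fun g g' h => (Prod.mk.inj h).1]
  simp

end TverbergPoint

theorem tverbergSupportsHaveCard_tverbergMap [Fintype κ] :
    TverbergSupportsHaveCard (tverbergMap κ n) (n + 1) (Fintype.card κ * n + 1) :=
  fun _ hx hdisj hmap => ncard_support_eq (fun i => (hx i).1) (fun i => (hx i).2) hdisj
    (groupMass_eq_of_tverbergMap_eq (fun i => (hx i).2) hmap)
    fun i j c => congrFun (hmap i j) (.inr c)

end TverbergType

open TverbergType in
theorem statement8_general (r k : ℕ) (hr : 2 ≤ r)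
    (m N : ℕ) (hm : m = (r - 1) * k) (hN : N = (r * k + 1) * (r - 1)) :
    ∃ f : (Fin (N + 1) → ℝ) →ᵃ[ℝ] EuclideanSpace ℝ (Fin (r * k)),
      ∀ x : Fin r → (Fin (N + 1) → ℝ),
        (∀ i, x i ∈ stdSimplex ℝ (Fin (N + 1))) →
        (Pairwise fun i j => Disjoint {a | 0 < x i a} {a | 0 < x j a}) →
        (∀ i j, f (x i) = f (x j)) →
        ∀ i, {a | 0 < x i a}.ncard = m + 1 := by
  obtain ⟨n, rfl⟩ : ∃ n, r = n + 1 := ⟨r - 1, by omega⟩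
  have hV : Fintype.card (Option (Fin k × Fin n) × Fin (n + 1)) = N + 1 := by
    simp [hN]; ring
  have hC : Fintype.card ((Fin k × Fin n) ⊕ Fin k) = (n + 1) * k := by
    simp; ring
  let out : ((Fin k × Fin n) ⊕ Fin k → ℝ) ≃ₗ[ℝ] EuclideanSpace ℝ (Fin ((n + 1) * k)) :=
    (LinearEquiv.funCongrLeft ℝ ℝ (Fintype.equivFinOfCardEq hC).symm).trans
      (WithLp.linearEquiv 2 ℝ _).symm
  refine ⟨(out.toLinearMap ∘ₗ tverbergMap (Fin k) n ∘ₗ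
    LinearMap.funLeft ℝ ℝ (Fintype.equivFinOfCardEq hV)).toAffineMap, ?_⟩
  have := (tverbergSupportsHaveCard_tverbergMap.comp_left out.injective).comp_equiv
    (Fintype.equivFinOfCardEq hV)
  rwa [show m = Fintype.card (Fin k) * n by simp [hm, mul_comm]]

/-- for `r ≥ 2`, `k ≥ 1`, `N = (rk+1)(r-1)`, `m = (r-1)k`, there is an
affine map `f : σ^N → ℝ^{rk}` (the restriction of an affine map on the ambient space)
all of whose `r`-Tverberg points are of type `{m}^r`: whenever `x_1,…,x_r ∈ σ^N` have
pairwise disjoint supports and equal images, each support has exactly `m+1` elements. -/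
theorem statement8 (r k : ℕ) (hr : 2 ≤ r) (hk : 1 ≤ k)
    (m N : ℕ) (hm : m = (r - 1) * k) (hN : N = (r * k + 1) * (r - 1)) :
    ∃ f : (Fin (N + 1) → ℝ) →ᵃ[ℝ] EuclideanSpace ℝ (Fin (r * k)),
      ∀ x : Fin r → (Fin (N + 1) → ℝ),
        (∀ i, x i ∈ stdSimplex ℝ (Fin (N + 1))) →
        (Pairwise fun i j => Disjoint {a | 0 < x i a} {a | 0 < x j a}) →
        (∀ i j, f (x i) = f (x j)) →
        ∀ i, {a | 0 < x i a}.ncard = m + 1 :=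
  statement8_general r k hr m N hm hN
end

section
/- Let r ≥ 2 and k ≥ 1, with m = (r−1)k and N = (rk+1)(r−1). Let f = (g,h) : σ^N → σ^m × σ^k be a continuous map satisfying condition (PR1). Suppose x_1,…,x_r ∈ σ^N have pairwise disjoint supports and f(x_1) = … = f(x_r) = y, and let J = {j : g(x_1)_j > 0}. Then for each i ∈ {1,…,r}: for every j ∈ J there is exactly one i′ ∈ Fin r with x_i(i′,j) > 0, and x_i(i′,j′) = 0 for all i′ whenever j′ ∉ J. In particular, each support supp(x_i) is a colorful set meeting each color class C_j with j ∈ J in exactly one vertex and containing no other vertices. -/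
open Set

/-- let `f = (g,h) : σ^N → σ^m × σ^k` be a continuous map satisfying
condition (PR1). If `x_1,…,x_r ∈ σ^N` have pairwise disjoint supports and equal images
under `f`, and `J = {j : g(x_1)_j > 0}`, then each `x_i` uses exactly one vertex from each
color class `C_j` with `j ∈ J` and no vertex from the other color classes. -/
theorem statement9 (r k : ℕ) (hr : 2 ≤ r) (hk : 1 ≤ k)
    (m : ℕ) (hm : m = (r - 1) * k)
    (g : ((Fin r × Fin (m + 1)) → ℝ) → (Fin (m + 1) → ℝ))
    (h : ((Fin r × Fin (m + 1)) → ℝ) → (Fin (k + 1) → ℝ))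
    (hgc : ContinuousOn g (stdSimplex ℝ (Fin r × Fin (m + 1))))
    (hhc : ContinuousOn h (stdSimplex ℝ (Fin r × Fin (m + 1))))
    (hgm : MapsTo g (stdSimplex ℝ (Fin r × Fin (m + 1))) (stdSimplex ℝ (Fin (m + 1))))
    (hhm : MapsTo h (stdSimplex ℝ (Fin r × Fin (m + 1))) (stdSimplex ℝ (Fin (k + 1))))
    (hPR1 : ∀ x ∈ stdSimplex ℝ (Fin r × Fin (m + 1)),
      (∀ j : Fin (m + 1), 0 < g x j ↔ ∃ i : Fin r, 0 < x (i, j)) ∧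
      (∀ l : Fin (k + 1), 0 < h x l))
    (x : Fin r → ((Fin r × Fin (m + 1)) → ℝ))
    (hx : ∀ i, x i ∈ stdSimplex ℝ (Fin r × Fin (m + 1)))
    (hdisj : Pairwise fun i i' => Disjoint {v | 0 < x i v} {v | 0 < x i' v})
    (heq : ∀ i i', g (x i) = g (x i') ∧ h (x i) = h (x i')) :
    ∀ i : Fin r,
      (∀ j : Fin (m + 1), 0 < g (x ⟨0, by omega⟩) j → ∃! i' : Fin r, 0 < x i (i', j)) ∧
      (∀ j : Fin (m + 1), ¬ 0 < g (x ⟨0, by omega⟩) j → ∀ i' : Fin r, x i (i', j) = 0) := by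
  intro i
  constructor
  · intro j hj
    -- each x a has some positive entry in column j
    set T : Fin r → Finset (Fin r) := fun a => Finset.univ.filter (fun i' => 0 < x a (i', j))
      with hT
    have hmem : ∀ a i', i' ∈ T a ↔ 0 < x a (i', j) := by
      intro a i'; simp [hT]
    have hne : ∀ a : Fin r, (T a).Nonempty := by
      intro a
      have hga : 0 < g (x a) j := by
        rw [(heq a ⟨0, by omega⟩).1]; exact hj
      obtain ⟨i', hi'⟩ := ((hPR1 (x a) (hx a)).1 j).mp hga
      exact ⟨i', (hmem a i').mpr hi'⟩
    have hTdisj : ∀ a b : Fin r, a ≠ b → Disjoint (T a) (T b) := by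
      intro a b hab
      rw [Finset.disjoint_left]
      intro c hca hcb
      exact Set.disjoint_left.mp (hdisj hab) ((hmem a c).mp hca) ((hmem b c).mp hcb)
    -- exactly one: otherwise counting contradiction
    obtain ⟨i', hi'⟩ := hne i
    refine ⟨i', (hmem i i').mp hi', ?_⟩
    intro b hb
    by_contra hbne
    have h2 : 2 ≤ (T i).card :=
      Finset.one_lt_card.mpr ⟨b, (hmem i b).mpr hb, i', hi', hbne⟩
    have hsum : ∑ a : Fin r, (T a).card = (Finset.univ.biUnion T).card :=
      (Finset.card_biUnion (fun a _ b _ hab => hTdisj a b hab)).symm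
    have hle : (Finset.univ.biUnion T).card ≤ r := by
      simpa using Finset.card_le_card (Finset.subset_univ (Finset.univ.biUnion T))
    have hlt : (∑ _a : Fin r, 1) < ∑ a : Fin r, (T a).card := by
      refine Finset.sum_lt_sum (fun a _ => Finset.card_pos.mpr (hne a)) ⟨i, Finset.mem_univ i, ?_⟩
      omega
    simp only [Finset.sum_const, Finset.card_univ, Fintype.card_fin, smul_eq_mul, mul_one] at hlt
    omega
  · intro j hj i'
    have hgi : ¬ 0 < g (x i) j := by
      rw [(heq i ⟨0, by omega⟩).1]; exact hj
    have hni : ¬ ∃ a : Fin r, 0 < x i (a, j) := fun ⟨a, ha⟩ =>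
      hgi (((hPR1 (x i) (hx i)).1 j).mpr ⟨a, ha⟩)
    push_neg at hni
    have h0 := (hx i).1 (i', j)
    linarith [hni i']
end

section
/- Let r ≥ 2 and k ≥ 1, with m = (r−1)k and N = (rk+1)(r−1). Every continuous map g : C → σ^m × σ^k on the colorful subcomplex C satisfying condition (PR1) (for all points of C) extends to a continuous map f : σ^N → σ^m × σ^k satisfying condition (PR1) on all of σ^N. -/
open Set

noncomputable section

/-- The colorful subcomplex `C ⊆ σ^N`: points of the standard simplex on the vertex set
`Fin r × Fin (m+1)` using at most one vertex from each color class `C_j`. -/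
def colorfulComplex (r m : ℕ) : Set ((Fin r × Fin (m + 1)) → ℝ) :=
  {x | x ∈ stdSimplex ℝ (Fin r × Fin (m + 1)) ∧
    ∀ (j : Fin (m + 1)) (i i' : Fin r), 0 < x (i, j) → 0 < x (i', j) → i = i'}

/-!
Extend `g` to a continuous map `G` on the whole space (Tietze) and choose a continuous `L ≥ 0`
whose zero set is exactly `C` (the space is perfectly normal). Where `L > 0`, repair the first
component by damping its `j`-th coordinate with `p_j / (p_j + L)`, which kills the colors absent
from `x`, and adding `L p_j`, which makes every present color visible; repair the second component
by adding `L`. The damping factor lies in `[0, 1]` and degenerates only where `p_j = L = 0`, that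
is at points of `C` where `g_j` vanishes, so the repaired map stays continuous. Nothing changes on
`C`, and renormalizing both components gives the extension.
-/

open Filter Topology

section Normalize

variable {ι : Type*} [Fintype ι]

def normalizeSum (y : ι → ℝ) : ι → ℝ := fun i => y i / ∑ j, y j

lemma normalizeSum_mem_stdSimplex {y : ι → ℝ} (hy : 0 ≤ y) (hsum : 0 < ∑ j, y j) :
    normalizeSum y ∈ stdSimplex ℝ ι :=
  ⟨fun i => div_nonneg (hy i) hsum.le, by
    simp only [normalizeSum, ← Finset.sum_div, div_self hsum.ne']⟩

lemma normalizeSum_pos_iff {y : ι → ℝ} (hsum : 0 < ∑ j, y j) (i : ι) :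
    0 < normalizeSum y i ↔ 0 < y i :=
  div_pos_iff_of_pos_right hsum

lemma normalizeSum_of_mem_stdSimplex {y : ι → ℝ} (hy : y ∈ stdSimplex ℝ ι) :
    normalizeSum y = y := by
  funext i
  simp [normalizeSum, hy.2]

lemma ContinuousOn.normalizeSum {X : Type*} [TopologicalSpace X] {s : Set X} {y : X → ι → ℝ}
    (hy : ContinuousOn y s) (hsum : ∀ x ∈ s, ∑ j, y x j ≠ 0) :
    ContinuousOn (fun x => _root_.normalizeSum (y x)) s :=
  continuousOn_pi.2 fun i =>
    (continuousOn_pi.1 hy i).div (continuousOn_finsetSum _ fun j _ => continuousOn_pi.1 hy j)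
      hsum

end Normalize

/-- Condition (PR1) at a point `x` with projection `q = p x ∈ σ^κ`. -/
def PR1 {κ μ : Type*} (q : κ → ℝ) (y : (κ → ℝ) × (μ → ℝ)) : Prop :=
  (∀ j, 0 < y.1 j ↔ 0 < q j) ∧ ∀ l, 0 < y.2 l

lemma PR1.sum_fst_pos {κ μ : Type*} [Fintype κ] {q : κ → ℝ} {y : (κ → ℝ) × (μ → ℝ)}
    (h : PR1 q y) (hq : q ∈ stdSimplex ℝ κ) (hy : 0 ≤ y.1) : 0 < ∑ j, y.1 j := by
  obtain ⟨j, -, hj⟩ := Finset.exists_ne_zero_of_sum_ne_zero (hq.2.trans_ne one_ne_zero)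
  exact Finset.sum_pos' (fun j _ => hy j) ⟨j, Finset.mem_univ j, (h.1 j).2 ((hq.1 j).lt_of_ne' hj)⟩

lemma PR1.sum_snd_pos {κ μ : Type*} [Fintype μ] [Nonempty μ] {q : κ → ℝ}
    {y : (κ → ℝ) × (μ → ℝ)} (h : PR1 q y) : 0 < ∑ l, y.2 l :=
  Finset.sum_pos (fun l _ => h.2 l) Finset.univ_nonempty

def normalizePair {κ μ : Type*} [Fintype κ] [Fintype μ] (y : (κ → ℝ) × (μ → ℝ)) :
    (κ → ℝ) × (μ → ℝ) :=
  (normalizeSum y.1, normalizeSum y.2)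

section NormalizePair

variable {κ μ : Type*} [Fintype κ] [Fintype μ] [Nonempty μ] {q : κ → ℝ}
  {y : (κ → ℝ) × (μ → ℝ)}

lemma PR1.normalizePair_mem (h : PR1 q y) (hq : q ∈ stdSimplex ℝ κ) (hy : 0 ≤ y.1) :
    normalizePair y ∈ stdSimplex ℝ κ ×ˢ stdSimplex ℝ μ :=
  ⟨normalizeSum_mem_stdSimplex hy (h.sum_fst_pos hq hy),
    normalizeSum_mem_stdSimplex (fun l => (h.2 l).le) h.sum_snd_pos⟩

lemma PR1.normalizePair (h : PR1 q y) (hq : q ∈ stdSimplex ℝ κ) (hy : 0 ≤ y.1) :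
    PR1 q (normalizePair y) :=
  ⟨fun j => (normalizeSum_pos_iff (h.sum_fst_pos hq hy) j).trans (h.1 j),
    fun l => (normalizeSum_pos_iff h.sum_snd_pos l).2 (h.2 l)⟩

end NormalizePair

lemma normalizePair_of_mem {κ μ : Type*} [Fintype κ] [Fintype μ] {y : (κ → ℝ) × (μ → ℝ)}
    (hy : y ∈ stdSimplex ℝ κ ×ˢ stdSimplex ℝ μ) : normalizePair y = y := by
  rw [normalizePair, normalizeSum_of_mem_stdSimplex hy.1, normalizeSum_of_mem_stdSimplex hy.2]

lemma ContinuousOn.normalizePair {X κ μ : Type*} [TopologicalSpace X] [Fintype κ] [Fintype μ]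
    {s : Set X} {y : X → (κ → ℝ) × (μ → ℝ)} (hy : ContinuousOn y s)
    (h₁ : ∀ x ∈ s, ∑ j, (y x).1 j ≠ 0) (h₂ : ∀ x ∈ s, ∑ l, (y x).2 l ≠ 0) :
    ContinuousOn (fun x => _root_.normalizePair (y x)) s :=
  (hy.fst.normalizeSum h₁).prodMk (hy.snd.normalizeSum h₂)

lemma continuousOn_mul_div_add {X : Type*} [TopologicalSpace X] {s : Set X} {u a b : X → ℝ}
    (hu : ContinuousOn u s) (ha : ContinuousOn a s) (hb : ContinuousOn b s)
    (ha₀ : ∀ x ∈ s, 0 ≤ a x) (hb₀ : ∀ x ∈ s, 0 ≤ b x)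
    (hu₀ : ∀ x ∈ s, a x + b x = 0 → u x = 0) :
    ContinuousOn (fun x => u x * (a x / (a x + b x))) s := by
  intro x hx
  by_cases hab : a x + b x = 0
  · have hbdd : ∀ y ∈ s, ‖a y / (a y + b y)‖ ≤ 1 := fun y hy => by
      rw [Real.norm_of_nonneg (div_nonneg (ha₀ y hy) (add_nonneg (ha₀ y hy) (hb₀ y hy)))]
      exact div_le_one_of_le₀ (le_add_of_nonneg_right (hb₀ y hy))
        (add_nonneg (ha₀ y hy) (hb₀ y hy))
    have hu' : Tendsto u (𝓝[s] x) (𝓝 0) := hu₀ x hx hab ▸ hu x hx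
    simpa only [ContinuousWithinAt, hu₀ x hx hab, zero_mul] using
      hu'.zero_mul_isBoundedUnder_le
        (isBoundedUnder_of_eventually_le (eventually_nhdsWithin_of_forall hbdd))
  · exact (hu x hx).mul ((ha x hx).div ((ha x hx).add (hb x hx)) hab)

section Repair

variable {κ μ : Type*}

def repair (y : (κ → ℝ) × (μ → ℝ)) (q : κ → ℝ) (t : ℝ) : (κ → ℝ) × (μ → ℝ) :=
  (fun j => max 0 (y.1 j) * (q j / (q j + t)) + t * q j, fun l => max 0 (y.2 l) + t)

lemma repair_zero {y : (κ → ℝ) × (μ → ℝ)} {q : κ → ℝ} (hy₁ : 0 ≤ y.1) (hy₂ : 0 ≤ y.2)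
    (h : ∀ j, 0 < y.1 j ↔ 0 < q j) : repair y q 0 = y := by
  refine Prod.ext (funext fun j => ?_) (funext fun l => ?_)
  · by_cases hq : 0 < q j
    · simpa [repair, hq.ne'] using hy₁ j
    · have : y.1 j = 0 := le_antisymm (not_lt.1 (mt (h j).1 hq)) (hy₁ j)
      simp [repair, this]
  · simpa [repair] using hy₂ l

lemma repair_fst_nonneg (y : (κ → ℝ) × (μ → ℝ)) {q : κ → ℝ} {t : ℝ} (hq : 0 ≤ q)
    (ht : 0 ≤ t) : 0 ≤ (repair y q t).1 := fun j =>
  add_nonneg (mul_nonneg (le_max_left _ _) (div_nonneg (hq j) (add_nonneg (hq j) ht)))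
    (mul_nonneg ht (hq j))

lemma pr1_repair_of_pos (y : (κ → ℝ) × (μ → ℝ)) {q : κ → ℝ} {t : ℝ} (hq : 0 ≤ q)
    (ht : 0 < t) : PR1 q (repair y q t) := by
  refine ⟨fun j => ⟨fun hpos => ?_, fun hqj => ?_⟩, fun l => ?_⟩
  · by_contra hqj
    have : q j = 0 := le_antisymm (not_lt.1 hqj) (hq j)
    simp [repair, this] at hpos
  · have := mul_nonneg (le_max_left 0 (y.1 j)) (div_nonneg (hq j) (add_nonneg (hq j) ht.le))
    exact add_pos_of_nonneg_of_pos this (mul_pos ht hqj)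
  · exact add_pos_of_nonneg_of_pos (le_max_left _ _) ht

lemma ContinuousOn.repair {X : Type*} [TopologicalSpace X] {s : Set X}
    {y : X → (κ → ℝ) × (μ → ℝ)} {q : X → κ → ℝ} {t : X → ℝ}
    (hy : ContinuousOn y s) (hq : ContinuousOn q s) (ht : ContinuousOn t s)
    (hq₀ : ∀ x ∈ s, 0 ≤ q x) (ht₀ : ∀ x ∈ s, 0 ≤ t x)
    (hy₀ : ∀ x ∈ s, ∀ j, q x j + t x = 0 → (y x).1 j ≤ 0) :
    ContinuousOn (fun x => _root_.repair (y x) (q x) (t x)) s := by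
  have hmax₁ (j : κ) : ContinuousOn (fun x => max 0 ((y x).1 j)) s :=
    continuousOn_const.sup (continuousOn_pi.1 hy.fst j)
  refine ContinuousOn.prodMk (continuousOn_pi.2 fun j => ?_) (continuousOn_pi.2 fun l => ?_)
  · refine (continuousOn_mul_div_add (hmax₁ j) (continuousOn_pi.1 hq j) ht
      (fun x hx => hq₀ x hx j) ht₀ fun x hx h => max_eq_left (hy₀ x hx j h)).add ?_
    exact ht.mul (continuousOn_pi.1 hq j)
  · exact (continuousOn_const.sup (continuousOn_pi.1 hy.snd l)).add ht

end Repair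

universe u v

lemma ContinuousOn.exists_continuousMap_eqOn {X : Type u} {Y : Type v} [TopologicalSpace X]
    [NormalSpace X] [TopologicalSpace Y] [TietzeExtension.{u, v} Y] {C : Set X} (hC : IsClosed C)
    {g : X → Y} (hg : ContinuousOn g C) : ∃ G : C(X, Y), EqOn G g C := by
  obtain ⟨G, hG⟩ := ContinuousMap.exists_restrict_eq hC ⟨C.domRestrict g, hg.domRestrict⟩
  exact ⟨G, fun x hx => DFunLike.congr_fun hG ⟨x, hx⟩⟩

theorem exists_extension_pr1 {X κ μ : Type*} [TopologicalSpace X] [PerfectlyNormalSpace X]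
    [Fintype κ] [Fintype μ] [Nonempty μ] {S C : Set X} (hC : IsClosed C)
    {p : X → κ → ℝ} (hp : Continuous p) (hpS : MapsTo p S (stdSimplex ℝ κ))
    {g : X → (κ → ℝ) × (μ → ℝ)} (hgc : ContinuousOn g C)
    (hgm : MapsTo g C (stdSimplex ℝ κ ×ˢ stdSimplex ℝ μ)) (hg : ∀ x ∈ C, PR1 (p x) (g x)) :
    ∃ f : X → (κ → ℝ) × (μ → ℝ), ContinuousOn f S ∧
      MapsTo f S (stdSimplex ℝ κ ×ˢ stdSimplex ℝ μ) ∧ (∀ x ∈ S, PR1 (p x) (f x)) ∧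
      EqOn f g C := by
  obtain ⟨G, hG⟩ := hgc.exists_continuousMap_eqOn hC
  obtain ⟨L, hLC, hL⟩ := perfectlyNormalSpace_iff_forall_isClosed_preimage_zero.1 ‹_› C hC
  have hL₀ (x : X) : 0 ≤ L x := (hL x).1
  have hmemC (x : X) : x ∈ C ↔ L x = 0 := by rw [hLC]; rfl
  set F := fun x => repair (G x) (p x) (L x) with hF
  have hFC : EqOn F g C := fun x hx => by
    simp only [hF, (hmemC x).1 hx, hG hx]
    exact repair_zero (hgm hx).1.1 (hgm hx).2.1 (hg x hx).1
  have hF_nonneg : ∀ x ∈ S, 0 ≤ (F x).1 := fun x hx => repair_fst_nonneg _ (hpS hx).1 (hL₀ x)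
  have hF_pr1 : ∀ x ∈ S, PR1 (p x) (F x) := by
    intro x hx
    by_cases hxC : x ∈ C
    · rw [hFC hxC]
      exact hg x hxC
    · exact pr1_repair_of_pos _ (hpS hx).1 ((hL₀ x).lt_of_ne' (mt (hmemC x).2 hxC))
  have hF_cont : ContinuousOn F S := by
    refine G.continuous.continuousOn.repair hp.continuousOn L.continuous.continuousOn
      (fun x hx => (hpS hx).1) (fun x _ => hL₀ x) fun x hx j hzero => ?_
    obtain ⟨hpj, hLx⟩ := (add_eq_zero_iff_of_nonneg ((hpS hx).1 j) (hL₀ x)).1 hzero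
    have hxC : x ∈ C := (hmemC x).2 hLx
    rw [hG hxC]
    exact not_lt.1 fun h => (((hg x hxC).1 j).1 h).ne' hpj
  refine ⟨fun x => normalizePair (F x), ?_, fun x hx => ?_, fun x hx => ?_, fun x hx => ?_⟩
  · exact hF_cont.normalizePair
      (fun x hx => ((hF_pr1 x hx).sum_fst_pos (hpS hx) (hF_nonneg x hx)).ne')
      (fun x hx => (hF_pr1 x hx).sum_snd_pos.ne')
  · exact (hF_pr1 x hx).normalizePair_mem (hpS hx) (hF_nonneg x hx)
  · exact (hF_pr1 x hx).normalizePair (hpS hx) (hF_nonneg x hx)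
  · simp only [hFC hx, normalizePair_of_mem (hgm hx)]

/-- The projection `p : σ^N → σ^m`. -/
def colorSum {ι κ : Type*} [Fintype ι] (x : ι × κ → ℝ) : κ → ℝ := fun j => ∑ i, x (i, j)

section ColorSum

variable {ι κ : Type*} [Fintype ι]

lemma continuous_colorSum : Continuous (colorSum : (ι × κ → ℝ) → κ → ℝ) :=
  continuous_pi fun _ => continuous_finsetSum _ fun _ _ => continuous_apply _

lemma colorSum_mem_stdSimplex [Fintype κ] {x : ι × κ → ℝ} (hx : x ∈ stdSimplex ℝ (ι × κ)) :
    colorSum x ∈ stdSimplex ℝ κ :=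
  ⟨fun j => Finset.sum_nonneg fun i _ => hx.1 (i, j), by
    rw [← hx.2, Fintype.sum_prod_type_right]
    rfl⟩

lemma pr1_colorSum_iff {μ : Type*} {x : ι × κ → ℝ} (hx : 0 ≤ x) {y : (κ → ℝ) × (μ → ℝ)} :
    PR1 (colorSum x) y ↔ (∀ j, 0 < y.1 j ↔ ∃ i, 0 < x (i, j)) ∧ ∀ l, 0 < y.2 l := by
  simp only [PR1, colorSum, Finset.sum_pos_iff_of_nonneg fun i _ => hx (i, _),
    Finset.mem_univ, true_and]

end ColorSum

lemma isClosed_colorfulComplex (r m : ℕ) : IsClosed (colorfulComplex r m) := by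
  simp only [colorfulComplex, ofPred_and, ofPred_mem_eq, ofPred_forall]
  refine (isClosed_stdSimplex _ _).inter <|
    isClosed_iInter fun j => isClosed_iInter fun i => isClosed_iInter fun i' => ?_
  by_cases h : i = i'
  · simp only [h, imp_true_iff, ofPred_true, isClosed_univ]
  · simp only [h, imp_false, ← not_and]
    exact ((isOpen_lt continuous_const (continuous_apply _)).inter
      (isOpen_lt continuous_const (continuous_apply _))).isClosed_compl

theorem statement10_general (r k : ℕ) (m : ℕ)
    (g : ((Fin r × Fin (m + 1)) → ℝ) → (Fin (m + 1) → ℝ) × (Fin (k + 1) → ℝ))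
    (hgc : ContinuousOn g (colorfulComplex r m))
    (hgm : MapsTo g (colorfulComplex r m)
      ((stdSimplex ℝ (Fin (m + 1))) ×ˢ (stdSimplex ℝ (Fin (k + 1)))))
    (hPR1 : ∀ x ∈ colorfulComplex r m,
      (∀ j : Fin (m + 1), 0 < (g x).1 j ↔ ∃ i : Fin r, 0 < x (i, j)) ∧
      (∀ l : Fin (k + 1), 0 < (g x).2 l)) :
    ∃ f : ((Fin r × Fin (m + 1)) → ℝ) → (Fin (m + 1) → ℝ) × (Fin (k + 1) → ℝ),
      ContinuousOn f (stdSimplex ℝ (Fin r × Fin (m + 1))) ∧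
      MapsTo f (stdSimplex ℝ (Fin r × Fin (m + 1)))
        ((stdSimplex ℝ (Fin (m + 1))) ×ˢ (stdSimplex ℝ (Fin (k + 1)))) ∧
      (∀ x ∈ stdSimplex ℝ (Fin r × Fin (m + 1)),
        (∀ j : Fin (m + 1), 0 < (f x).1 j ↔ ∃ i : Fin r, 0 < x (i, j)) ∧
        (∀ l : Fin (k + 1), 0 < (f x).2 l)) ∧
      (∀ x ∈ colorfulComplex r m, f x = g x) := by
  obtain ⟨f, hfc, hfm, hf, hfg⟩ := exists_extension_pr1 (isClosed_colorfulComplex r m)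
    continuous_colorSum (fun _ hx => colorSum_mem_stdSimplex hx) hgc hgm
    fun x hx => (pr1_colorSum_iff hx.1.1).2 (hPR1 x hx)
  exact ⟨f, hfc, hfm, fun x hx => (pr1_colorSum_iff hx.1).1 (hf x hx), hfg⟩

/-- every continuous map `g : C → σ^m × σ^k` satisfying condition (PR1)
on `C` extends to a continuous map `f : σ^N → σ^m × σ^k` satisfying condition (PR1) on
all of `σ^N`. -/
theorem statement10 (r k : ℕ) (hr : 2 ≤ r) (hk : 1 ≤ k)
    (m : ℕ) (hm : m = (r - 1) * k)
    (g : ((Fin r × Fin (m + 1)) → ℝ) → (Fin (m + 1) → ℝ) × (Fin (k + 1) → ℝ))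
    (hgc : ContinuousOn g (colorfulComplex r m))
    (hgm : MapsTo g (colorfulComplex r m)
      ((stdSimplex ℝ (Fin (m + 1))) ×ˢ (stdSimplex ℝ (Fin (k + 1)))))
    (hPR1 : ∀ x ∈ colorfulComplex r m,
      (∀ j : Fin (m + 1), 0 < (g x).1 j ↔ ∃ i : Fin r, 0 < x (i, j)) ∧
      (∀ l : Fin (k + 1), 0 < (g x).2 l)) :
    ∃ f : ((Fin r × Fin (m + 1)) → ℝ) → (Fin (m + 1) → ℝ) × (Fin (k + 1) → ℝ),
      ContinuousOn f (stdSimplex ℝ (Fin r × Fin (m + 1))) ∧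
      MapsTo f (stdSimplex ℝ (Fin r × Fin (m + 1)))
        ((stdSimplex ℝ (Fin (m + 1))) ×ˢ (stdSimplex ℝ (Fin (k + 1)))) ∧
      (∀ x ∈ stdSimplex ℝ (Fin r × Fin (m + 1)),
        (∀ j : Fin (m + 1), 0 < (f x).1 j ↔ ∃ i : Fin r, 0 < x (i, j)) ∧
        (∀ l : Fin (k + 1), 0 < (f x).2 l)) ∧
      (∀ x ∈ colorfulComplex r m, f x = g x) :=
  statement10_general r k m g hgc hgm hPR1
end
end

section
/- Let r ≥ 2 and k ≥ 1, with m = (r−1)k and N = (rk+1)(r−1). Let f : σ^N → ℝ^{m+1} × ℝ^{k+1} be the restriction of an affine map such that for every vertex v_{i,j}, f(v_{i,j}) ∈ {e_j} × relint σ^k, where e_j is the j-th vertex of σ^m. Then: (a) f maps σ^N into σ^m × σ^k and there is a map h : σ^N → σ^k with f(x) = (p(x), h(x)) for all x ∈ σ^N; (b) f satisfies condition (PR1); and (c) f is injective on every colorful face of σ^N (every face containing at most one vertex from each color class C_j). -/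
open Set

/-- let `f : σ^N → ℝ^{m+1} × ℝ^{k+1}` be the restriction of an affine
map sending each vertex `v_{i,j}` into `{e_j} × relint σ^k`. Then (a) `f` maps `σ^N` into
`σ^m × σ^k` with first component the projection `p`; (b) `f` satisfies condition (PR1);
and (c) `f` is injective on every colorful face of `σ^N`. -/
theorem statement11 (r k : ℕ) (hr : 2 ≤ r) (hk : 1 ≤ k)
    (m : ℕ) (hm : m = (r - 1) * k)
    (f : ((Fin r × Fin (m + 1)) → ℝ) →ᵃ[ℝ] ((Fin (m + 1) → ℝ) × (Fin (k + 1) → ℝ)))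
    (hvert : ∀ (i : Fin r) (j : Fin (m + 1)),
      (f (Pi.single (i, j) 1)).1 = Pi.single j 1 ∧
      (f (Pi.single (i, j) 1)).2 ∈ stdSimplex ℝ (Fin (k + 1)) ∧
      (∀ l : Fin (k + 1), 0 < (f (Pi.single (i, j) 1)).2 l)) :
    (∀ x ∈ stdSimplex ℝ (Fin r × Fin (m + 1)),
      f x ∈ (stdSimplex ℝ (Fin (m + 1))) ×ˢ (stdSimplex ℝ (Fin (k + 1))) ∧
      (f x).1 = fun j => ∑ i : Fin r, x (i, j)) ∧
    (∀ x ∈ stdSimplex ℝ (Fin r × Fin (m + 1)),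
      (∀ j : Fin (m + 1), 0 < (f x).1 j ↔ ∃ i : Fin r, 0 < x (i, j)) ∧
      (∀ l : Fin (k + 1), 0 < (f x).2 l)) ∧
    (∀ S : Finset (Fin r × Fin (m + 1)),
      (∀ (j : Fin (m + 1)) (i i' : Fin r), (i, j) ∈ S → (i', j) ∈ S → i = i') →
      Set.InjOn f {x | x ∈ stdSimplex ℝ (Fin r × Fin (m + 1)) ∧ ∀ v ∉ S, x v = 0}) := by
  -- Key: f of a point in the simplex is the convex combination of the vertex images.
  have key : ∀ x ∈ stdSimplex ℝ (Fin r × Fin (m + 1)),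
      f x = ∑ v : Fin r × Fin (m + 1), x v • f (Pi.single v 1) := by
    intro x hx
    have hw : ∑ v : Fin r × Fin (m + 1), x v = 1 := hx.2
    have hrep : (Finset.univ.affineCombination ℝ
        (fun v => (Pi.single v 1 : (Fin r × Fin (m + 1)) → ℝ)) x) = x := by
      rw [Finset.affineCombination_eq_linear_combination _ _ _ hw]
      funext w
      simp [Finset.sum_apply, Pi.single_apply, Finset.sum_ite_eq']
    calc f x = f (Finset.univ.affineCombination ℝ
          (fun v => (Pi.single v 1 : (Fin r × Fin (m + 1)) → ℝ)) x) := by rw [hrep]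
      _ = Finset.univ.affineCombination ℝ (fun v => f (Pi.single v 1)) x :=
          Finset.map_affineCombination _ _ _ hw f
      _ = ∑ v : Fin r × Fin (m + 1), x v • f (Pi.single v 1) :=
          Finset.affineCombination_eq_linear_combination _ _ _ hw
  -- first component is the projection p
  have hfst : ∀ x ∈ stdSimplex ℝ (Fin r × Fin (m + 1)),
      (f x).1 = fun j => ∑ i : Fin r, x (i, j) := by
    intro x hx
    rw [key x hx]
    funext j
    rw [Prod.fst_sum, Finset.sum_apply]
    have : ∀ v : Fin r × Fin (m + 1),
        (x v • f (Pi.single v 1)).1 j = if j = v.2 then x v else 0 := by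
      rintro ⟨i, j'⟩
      rw [Prod.smul_fst, Pi.smul_apply, (hvert i j').1]
      simp [Pi.single_apply]
    simp only [this]
    rw [Fintype.sum_prod_type_right, Finset.sum_comm]
    refine Finset.sum_congr rfl fun i _ => ?_
    exact (Finset.sum_ite_eq Finset.univ j fun j' => x (i, j')).trans (by simp)
  -- second component as a sum
  have hsnd : ∀ x ∈ stdSimplex ℝ (Fin r × Fin (m + 1)), ∀ l : Fin (k + 1),
      (f x).2 l = ∑ v : Fin r × Fin (m + 1), x v * (f (Pi.single v 1)).2 l := by
    intro x hx l
    rw [key x hx, Prod.snd_sum, Finset.sum_apply]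
    rfl
  refine ⟨?_, ?_, ?_⟩
  · intro x hx
    refine ⟨⟨?_, ?_⟩, hfst x hx⟩
    · rw [hfst x hx]
      constructor
      · intro j
        exact Finset.sum_nonneg fun i _ => hx.1 (i, j)
      · rw [← hx.2, Fintype.sum_prod_type_right]
    · constructor
      · intro l
        rw [hsnd x hx l]
        exact Finset.sum_nonneg fun v _ => mul_nonneg (hx.1 v)
          ((hvert v.1 v.2).2.1.1 l)
      · have : ∀ l, (f x).2 l = ∑ v : Fin r × Fin (m + 1),
            x v * (f (Pi.single v 1)).2 l := hsnd x hx
        simp only [this]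
        rw [Finset.sum_comm]
        conv_rhs => rw [← hx.2]
        refine Finset.sum_congr rfl fun v _ => ?_
        rw [← Finset.mul_sum, (hvert v.1 v.2).2.1.2, mul_one]
  · intro x hx
    constructor
    · intro j
      rw [hfst x hx]
      constructor
      · intro hpos
        by_contra h
        push_neg at h
        have : ∀ i : Fin r, x (i, j) = 0 := fun i => le_antisymm (h i) (hx.1 (i, j))
        simp [this] at hpos
      · rintro ⟨i, hi⟩
        exact Finset.sum_pos' (fun i' _ => hx.1 (i', j)) ⟨i, Finset.mem_univ i, hi⟩
    · intro l
      rw [hsnd x hx l]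
      -- there is some v with x v > 0
      obtain ⟨v, hv⟩ : ∃ v, 0 < x v := by
        by_contra h
        push_neg at h
        have h0 : ∑ v : Fin r × Fin (m + 1), x v = 0 :=
          Finset.sum_eq_zero fun v _ => le_antisymm (h v) (hx.1 v)
        rw [hx.2] at h0
        norm_num at h0
      exact Finset.sum_pos' (fun w _ => mul_nonneg (hx.1 w) ((hvert w.1 w.2).2.1.1 l))
        ⟨v, Finset.mem_univ v, mul_pos hv ((hvert v.1 v.2).2.2 l)⟩
  · intro S hS x hx y hy hxy
    have hpx := hfst x hx.1
    have hpy := hfst y hy.1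
    funext v
    obtain ⟨i, j⟩ := v
    by_cases hvS : (i, j) ∈ S
    · have hxj : ∑ i' : Fin r, x (i', j) = x (i, j) := by
        refine Finset.sum_eq_single i (fun i' _ hne => ?_) (by simp)
        refine hx.2 (i', j) fun hmem => hne (hS j i' i hmem hvS)
      have hyj : ∑ i' : Fin r, y (i', j) = y (i, j) := by
        refine Finset.sum_eq_single i (fun i' _ hne => ?_) (by simp)
        refine hy.2 (i', j) fun hmem => hne (hS j i' i hmem hvS)
      have : (f x).1 j = (f y).1 j := by rw [hxy]
      rw [hpx, hpy] at this
      simp only at this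
      rw [hxj, hyj] at this
      exact this
    · rw [hx.2 (i, j) hvS, hy.2 (i, j) hvS]
end

section
/- Let d ≥ 1 and r ≥ 2, and let m_1,…,m_r be integers with 0 ≤ m_i ≤ d and Σ_{i=1}^r (d − m_i) = d (equivalently Σ m_i = d(r−1)). For matrices C_i ∈ ℝ^{d×(d−m_i)}, 1 ≤ i ≤ r, let B ∈ ℝ^{d×d} be the horizontal concatenation [C_r | C_{r−1} | … | C_1], and let B_i ∈ ℝ^{d×m_i} be the same concatenation with the block C_i omitted. Let M_P ∈ ℝ^{dr×d(r−1)} be the block-diagonal matrix with diagonal blocks B_1,…,B_r, and let M_δ ∈ ℝ^{dr×d} be the vertical stack of r copies of B. Then det [M_P | M_δ] = (−1)^t (det B)^r, where t = Σ_{i=1}^r (r−i) d (d−m_i) + Σ_{1≤i<j≤r} (d−m_i)(d−m_j). -/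
open Finset

namespace S13

/-! ### Counting helpers -/

theorem count_val_Ico {d a b : ℕ} (hb : b ≤ d) :
    ((univ : Finset (Fin d)).filter fun c => a ≤ c.val ∧ c.val < b).card = b - a := by
  have h : ∀ x ∈ Finset.Ico a b, x < d := fun x hx => lt_of_lt_of_le (Finset.mem_Ico.mp hx).2 hb
  have he : ((univ : Finset (Fin d)).filter fun c => a ≤ c.val ∧ c.val < b)
      = (Finset.Ico a b).attachFin h := by
    ext c; simp [Finset.mem_attachFin, Finset.mem_Ico]
  rw [he, Finset.card_attachFin, Nat.card_Ico]

theorem card_filter_prod {α β : Type*} [Fintype α] [Fintype β] [DecidableEq α]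
    (p : α × β → Prop) [DecidablePred p] :
    (univ.filter p).card = ∑ a : α, ((univ : Finset β).filter fun b => p (a, b)).card := by
  rw [Finset.card_eq_sum_card_fiberwise (f := Prod.fst) (t := univ) (fun x _ => mem_univ _)]
  refine Finset.sum_congr rfl fun a _ => ?_
  refine Finset.card_bij (fun x _ => x.2) ?_ ?_ ?_
  · rintro ⟨a', b⟩ hx
    simp only [mem_filter, mem_univ, true_and] at hx ⊢
    obtain ⟨hp, rfl⟩ := hx
    exact hp
  · rintro ⟨a₁, b₁⟩ h₁ ⟨a₂, b₂⟩ h₂ h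
    simp only [mem_filter, mem_univ, true_and] at h₁ h₂
    obtain ⟨-, rfl⟩ := h₁; obtain ⟨-, rfl⟩ := h₂
    simp_all
  · intro b hb
    simp only [mem_filter, mem_univ, true_and] at hb
    exact ⟨(a, b), by simp [hb], rfl⟩

theorem card_filter_equiv {α β : Type*} [Fintype α] [Fintype β] [DecidableEq α] [DecidableEq β]
    (e : α ≃ β) (p : β → Prop) [DecidablePred p] :
    (univ.filter fun a => p (e a)).card = (univ.filter p).card := by
  refine Finset.card_bij (fun a _ => e a) ?_ ?_ ?_
  · intro a ha; simp only [mem_filter, mem_univ, true_and] at ha ⊢; exact ha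
  · intro a _ a' _ h; exact e.injective h
  · intro b hb
    simp only [mem_filter, mem_univ, true_and] at hb
    exact ⟨e.symm b, by simp [hb], by simp⟩

/-! ### Sign via inversions -/

theorem sign_eq_signAux {n : ℕ} (f : Equiv.Perm (Fin n)) :
    Equiv.Perm.sign f = Equiv.Perm.signAux f := by
  refine Equiv.Perm.swap_induction_on f ?_ ?_
  · simp [Equiv.Perm.signAux_one]
  · intro f x y hxy ih
    rw [Equiv.Perm.sign_mul, Equiv.Perm.signAux_mul, ih, Equiv.Perm.sign_swap hxy,
      Equiv.Perm.signAux_swap hxy]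

theorem signAux_eq_pow {n : ℕ} (f : Equiv.Perm (Fin n)) :
    Equiv.Perm.signAux f
      = (-1 : ℤˣ) ^ ((Equiv.Perm.finPairsLT n).filter fun x => f x.1 ≤ f x.2).card := by
  unfold Equiv.Perm.signAux
  rw [Finset.prod_ite, Finset.prod_const, Finset.prod_const_one, mul_one]

/-! ### Determinant of 1 + squarely-nilpotent -/

theorem det_one_add_sq_zero {ι : Type*} [Fintype ι] [DecidableEq ι]
    (F : Matrix ι ι ℝ) (h : F * F = 0) : (1 + F).det = 1 := by
  have hnil : IsNilpotent F := ⟨2, by rwa [pow_two]⟩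
  have hu := Matrix.isUnit_charpolyRev_of_isNilpotent hnil
  obtain ⟨u, hu1, hu2⟩ := Polynomial.isUnit_iff.mp hu
  have h0 : Polynomial.eval 0 F.charpolyRev = 1 := Matrix.eval_charpolyRev
  rw [← hu2] at h0
  simp only [Polynomial.eval_C] at h0
  have hcp : F.charpolyRev = 1 := by rw [← hu2, h0]; simp
  have hev : (1 + F).det = Polynomial.eval (-1) F.charpolyRev := by
    rw [Matrix.charpolyRev, ← Polynomial.coe_evalRingHom, RingHom.map_det]
    congr 1
    ext i j
    by_cases hij : i = j <;>
      simp [Matrix.map_apply, Matrix.sub_apply, Matrix.smul_apply, Matrix.one_apply, hij,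
        Matrix.add_apply]
  rw [hev, hcp]; simp

/-! ### Base-d arithmetic -/

theorem nat_mul_add_lt_iff {d i a i' a' : ℕ} (ha : a < d) (ha' : a' < d) :
    d * i + a < d * i' + a' ↔ (i < i' ∨ (i = i' ∧ a < a')) := by
  constructor
  · intro h
    rcases lt_trichotomy i i' with hi | hi | hi
    · exact Or.inl hi
    · subst hi; exact Or.inr ⟨rfl, by omega⟩
    · exfalso
      have h1 : d * (i' + 1) ≤ d * i := Nat.mul_le_mul_left d hi
      rw [Nat.mul_succ] at h1; omega
  · rintro (hi | ⟨rfl, hab⟩)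
    · have h1 : d * (i + 1) ≤ d * i' := Nat.mul_le_mul_left d hi
      rw [Nat.mul_succ] at h1; omega
    · omega

theorem nat_mul_add_inj {d i a i' a' : ℕ} (ha : a < d) (ha' : a' < d)
    (h : d * i + a = d * i' + a') : i = i' ∧ a = a' := by
  rcases lt_trichotomy i i' with hi | hi | hi
  · have := (nat_mul_add_lt_iff ha ha').mpr (Or.inl hi); omega
  · subst hi; omega
  · have := (nat_mul_add_lt_iff ha' ha).mpr (Or.inl hi); omega

/-! ### Offsets -/

variable {s : ℕ} (v : Fin s → ℕ)

def NL (k : ℕ) : ℕ := ∑ i ∈ univ.filter (fun i : Fin s => (i : ℕ) < k), v i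

def NR (k : ℕ) : ℕ := ∑ i ∈ univ.filter (fun i : Fin s => k ≤ (i : ℕ)), v i

theorem NL_zero : NL v 0 = 0 := by simp [NL]

theorem NL_add_NR (k : ℕ) : NL v k + NR v k = ∑ i, v i := by
  rw [NL, NR]
  rw [show (univ.filter fun i : Fin s => k ≤ (i : ℕ)) =
    (univ.filter fun i : Fin s => ¬ ((i : ℕ) < k)) from by ext i; simp [Nat.not_lt]]
  exact Finset.sum_filter_add_sum_filter_not _ _ _

theorem NL_succ {k : ℕ} (hk : k < s) : NL v (k + 1) = NL v k + v ⟨k, hk⟩ := by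
  rw [NL, NL, show (univ.filter fun i : Fin s => (i : ℕ) < k + 1)
      = insert ⟨k, hk⟩ (univ.filter fun i : Fin s => (i : ℕ) < k) from by
    ext i; simp [Fin.ext_iff]; omega]
  rw [Finset.sum_insert (by simp)]
  ring

theorem NL_mono {k l : ℕ} (h : k ≤ l) : NL v k ≤ NL v l := by
  apply Finset.sum_le_sum_of_subset
  intro i hi
  simp only [mem_filter, mem_univ, true_and] at hi ⊢
  omega

theorem NL_top {k : ℕ} (h : s ≤ k) : NL v k = ∑ i, v i := by
  rw [NL, Finset.filter_true_of_mem (fun i _ => lt_of_lt_of_le i.2 h)]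

theorem NR_zero : NR v 0 = ∑ i, v i := by
  have := NL_add_NR v 0; have := NL_zero v; omega

theorem NR_succ {k : ℕ} (hk : k < s) : NR v k = v ⟨k, hk⟩ + NR v (k + 1) := by
  have h1 := NL_add_NR v k; have h2 := NL_add_NR v (k + 1); have h3 := NL_succ v hk; omega

theorem NR_top {k : ℕ} (h : s ≤ k) : NR v k = 0 := by
  have h1 := NL_add_NR v k; have h2 := NL_top v h; omega

theorem NR_anti {k l : ℕ} (h : k ≤ l) : NR v l ≤ NR v k := by
  have h1 := NL_add_NR v k; have h2 := NL_add_NR v l; have h3 := NL_mono v h; omega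

theorem NL_decomp {c : ℕ} (hc : c < ∑ i, v i) :
    ∃ (k : Fin s) (j : ℕ), j < v k ∧ c = NL v k.val + j := by
  have P0 : NL v 0 ≤ c := by rw [NL_zero]; omega
  have hspec : NL v (Nat.findGreatest (fun k => NL v k ≤ c) s) ≤ c :=
    Nat.findGreatest_spec (P := fun k => NL v k ≤ c) (Nat.zero_le s) P0
  have hKle : Nat.findGreatest (fun k => NL v k ≤ c) s ≤ s := Nat.findGreatest_le s
  set K := Nat.findGreatest (fun k => NL v k ≤ c) s with hK
  have hKs : K < s := by
    rcases eq_or_lt_of_le hKle with h | h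
    · exfalso; rw [h, NL_top v le_rfl] at hspec; omega
    · exact h
  have hnot : ¬ (NL v (K + 1) ≤ c) :=
    Nat.findGreatest_is_greatest (P := fun k => NL v k ≤ c)
      (by rw [← hK]; exact Nat.lt_succ_self K) (by omega)
  rw [NL_succ v hKs] at hnot
  exact ⟨⟨K, hKs⟩, c - NL v K, by simpa using by omega, by simp only [Fin.val_mk]; omega⟩

theorem NR_decomp {c : ℕ} (hc : c < ∑ i, v i) :
    ∃ (k : Fin s) (j : ℕ), j < v k ∧ c = NR v (k.val + 1) + j := by
  have P0 : c < NR v 0 := by rw [NR_zero]; omega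
  have hspec : c < NR v (Nat.findGreatest (fun k => c < NR v k) s) :=
    Nat.findGreatest_spec (P := fun k => c < NR v k) (Nat.zero_le s) P0
  have hKle : Nat.findGreatest (fun k => c < NR v k) s ≤ s := Nat.findGreatest_le s
  set K := Nat.findGreatest (fun k => c < NR v k) s with hK
  have hKs : K < s := by
    rcases eq_or_lt_of_le hKle with h | h
    · exfalso; rw [h, NR_top v le_rfl] at hspec; omega
    · exact h
  have hnot : ¬ (c < NR v (K + 1)) :=
    Nat.findGreatest_is_greatest (P := fun k => c < NR v k)
      (by rw [← hK]; exact Nat.lt_succ_self K) (by omega)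
  have hsucc := NR_succ v hKs
  refine ⟨⟨K, hKs⟩, c - NR v (K + 1), by omega, ?_⟩
  show c = NR v (K + 1) + (c - NR v (K + 1))
  omega

def roff (i : Fin s) : ℕ := ∑ i' ∈ univ.filter fun i' => i < i', v i'

def loff (i : Fin s) : ℕ := ∑ i' ∈ univ.filter fun i' => i' < i, v i'

def boff (i i' : Fin s) : ℕ := ∑ i'' ∈ univ.filter fun i'' => i'' ≠ i ∧ i' < i'', v i''

theorem roff_eq_NR (i : Fin s) : roff v i = NR v (i.val + 1) := by
  rw [roff, NR]; apply Finset.sum_congr _ (fun _ _ => rfl)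
  ext i'; simp only [mem_filter, mem_univ, true_and, Fin.lt_def]; omega

theorem loff_eq_NL (i : Fin s) : loff v i = NL v i.val := by
  rw [loff, NL]; apply Finset.sum_congr _ (fun _ _ => rfl)
  ext i'; simp only [mem_filter, mem_univ, true_and, Fin.lt_def]

theorem roff_succ_le {i i' : Fin s} (h : i < i') : roff v i' + v i' ≤ roff v i := by
  rw [roff_eq_NR, roff_eq_NR]
  have h1 := NR_succ v i'.isLt
  have h2 : NR v i'.val ≤ NR v (i.val + 1) := NR_anti v (by exact h)
  simp only [Fin.eta] at h1
  omega

theorem roff_add_le (i : Fin s) : roff v i + v i ≤ ∑ i', v i' := by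
  rw [roff_eq_NR]
  have h1 := NR_succ v i.isLt
  have h2 : NR v i.val ≤ NR v 0 := NR_anti v (Nat.zero_le _)
  have h3 := NR_zero v
  simp only [Fin.eta] at h1
  omega

theorem roff_exists {c : ℕ} (hc : c < ∑ i, v i) :
    ∃ (i : Fin s) (j : ℕ), j < v i ∧ c = roff v i + j := by
  obtain ⟨k, j, hj, hc⟩ := NR_decomp v hc
  exact ⟨k, j, hj, by rw [roff_eq_NR]; exact hc⟩

theorem roff_unique {i i' : Fin s} {j j' : ℕ} (hj : j < v i) (hj' : j' < v i')
    (h : roff v i + j = roff v i' + j') : i = i' ∧ j = j' := by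
  rcases lt_trichotomy i i' with hlt | heq | hlt
  · have := roff_succ_le v hlt; omega
  · subst heq; omega
  · have := roff_succ_le v hlt; omega

theorem loff_succ_le {i i' : Fin s} (h : i < i') : loff v i + v i ≤ loff v i' := by
  rw [loff_eq_NL, loff_eq_NL]
  have h1 := NL_succ v i.isLt
  have h2 : NL v (i.val + 1) ≤ NL v i'.val := NL_mono v (by exact h)
  simp only [Fin.eta] at h1
  omega

theorem loff_add_le (i : Fin s) : loff v i + v i ≤ ∑ i', v i' := by
  rw [loff_eq_NL]
  have h1 := NL_succ v i.isLt
  have h2 : NL v (i.val + 1) ≤ NL v s := NL_mono v i.isLt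
  have h3 := NL_top v (le_refl s)
  simp only [Fin.eta] at h1
  omega

theorem loff_unique {i i' : Fin s} {j j' : ℕ} (hj : j < v i) (hj' : j' < v i')
    (h : loff v i + j = loff v i' + j') : i = i' ∧ j = j' := by
  rcases lt_trichotomy i i' with hlt | heq | hlt
  · have := loff_succ_le v hlt; omega
  · subst heq; omega
  · have := loff_succ_le v hlt; omega

theorem boff_succ_le {i i₁ i₂ : Fin s} (h : i₁ < i₂) (h₂ : i₂ ≠ i) :
    boff v i i₂ + v i₂ ≤ boff v i i₁ := by
  rw [boff, boff]
  have hni : i₂ ∉ univ.filter fun i'' => i'' ≠ i ∧ i₂ < i'' := by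
    simp only [mem_filter, mem_univ, true_and, not_and]
    intro _
    exact lt_irrefl i₂
  rw [add_comm, ← Finset.sum_insert hni]
  apply Finset.sum_le_sum_of_subset
  intro x hx
  simp only [Finset.mem_insert, mem_filter, mem_univ, true_and] at hx ⊢
  rcases hx with rfl | ⟨hx1, hx2⟩
  · exact ⟨h₂, h⟩
  · exact ⟨hx1, lt_trans h hx2⟩

theorem boff_add_le {i i' : Fin s} (h : i' ≠ i) :
    boff v i i' + v i' + v i ≤ ∑ i'', v i'' := by
  rw [boff]
  have hni' : i' ∉ univ.filter fun i'' => i'' ≠ i ∧ i' < i'' := by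
    simp only [mem_filter, mem_univ, true_and, not_and]
    intro _
    exact lt_irrefl i'
  have hni : i ∉ insert i' (univ.filter fun i'' => i'' ≠ i ∧ i' < i'') := by
    simp only [Finset.mem_insert, mem_filter, mem_univ, true_and, not_or, not_and]
    exact ⟨fun hc => h (hc.symm), fun hc => absurd rfl hc⟩
  calc (∑ i'' ∈ univ.filter fun i'' => i'' ≠ i ∧ i' < i'', v i'') + v i' + v i
      = ∑ x ∈ insert i (insert i' (univ.filter fun i'' => i'' ≠ i ∧ i' < i'')), v x := by
        rw [Finset.sum_insert hni, Finset.sum_insert hni']; ring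
    _ ≤ ∑ i'', v i'' := Finset.sum_le_sum_of_subset (fun x _ => mem_univ x)

theorem boff_unique {i i₁ i₂ : Fin s} {j₁ j₂ : ℕ} (h₁ : i₁ ≠ i) (h₂ : i₂ ≠ i)
    (hj₁ : j₁ < v i₁) (hj₂ : j₂ < v i₂)
    (h : boff v i i₁ + j₁ = boff v i i₂ + j₂) : i₁ = i₂ ∧ j₁ = j₂ := by
  rcases lt_trichotomy i₁ i₂ with hlt | heq | hlt
  · have := boff_succ_le v hlt h₂; omega
  · subst heq; omega
  · have := boff_succ_le v hlt h₁; omega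

end S13

open S13 Equiv

/-- Lemma on products and the diagonal: let `Σ_i (d - m_i) = d`, let
`B = [C_r | C_{r-1} | … | C_1]` (characterized entrywise via the column offsets
`Σ_{i' > i} (d - m_{i'})`), let `B_i` be the same concatenation with block `C_i` omitted,
let `M = [M_P | M_δ]` where `M_P` is block diagonal with blocks `B_1,…,B_r` and `M_δ` is
the vertical stack of `r` copies of `B`. Then `det M = (-1)^t (det B)^r` with
`t = Σ_i (r-i) d (d-m_i) + Σ_{i<j} (d-m_i)(d-m_j)`. -/
theorem statement13 (d r : ℕ) (hd : 1 ≤ d) (hr : 2 ≤ r)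
    (m : Fin r → ℕ) (hm : ∀ i, m i ≤ d)
    (hsum : (∑ i : Fin r, (d - m i)) = d)
    (C : (i : Fin r) → Matrix (Fin d) (Fin (d - m i)) ℝ)
    (B : Matrix (Fin d) (Fin d) ℝ)
    (hB : ∀ (i : Fin r) (j : Fin (d - m i)) (a : Fin d)
      (h : (∑ i' ∈ univ.filter fun i' => i < i', (d - m i')) + (j : ℕ) < d),
      B a ⟨(∑ i' ∈ univ.filter fun i' => i < i', (d - m i')) + (j : ℕ), h⟩ = C i a j)
    (Bi : (i : Fin r) → Matrix (Fin d) (Fin (m i)) ℝ)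
    (hBi : ∀ (i i' : Fin r), i' ≠ i → ∀ (j : Fin (d - m i')) (a : Fin d)
      (h : (∑ i'' ∈ univ.filter fun i'' => i'' ≠ i ∧ i' < i'', (d - m i'')) + (j : ℕ) < m i),
      Bi i a ⟨(∑ i'' ∈ univ.filter fun i'' => i'' ≠ i ∧ i' < i'', (d - m i'')) + (j : ℕ), h⟩
        = C i' a j)
    (M : Matrix (Fin (d * r)) (Fin (d * r)) ℝ)
    (hMP : ∀ (i : Fin r) (j : Fin (m i)) (i'' : Fin r) (a : Fin d)
      (hrow : d * (i'' : ℕ) + (a : ℕ) < d * r)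
      (hcol : (∑ i' ∈ univ.filter fun i' => i' < i, m i') + (j : ℕ) < d * r),
      M ⟨d * (i'' : ℕ) + (a : ℕ), hrow⟩
        ⟨(∑ i' ∈ univ.filter fun i' => i' < i, m i') + (j : ℕ), hcol⟩
        = if i'' = i then Bi i a j else 0)
    (hMδ : ∀ (i : Fin r) (a b : Fin d)
      (hrow : d * (i : ℕ) + (a : ℕ) < d * r)
      (hcol : d * (r - 1) + (b : ℕ) < d * r),
      M ⟨d * (i : ℕ) + (a : ℕ), hrow⟩ ⟨d * (r - 1) + (b : ℕ), hcol⟩ = B a b) :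
    M.det = (-1 : ℝ) ^ ((∑ i : Fin r, (r - 1 - (i : ℕ)) * d * (d - m i))
        + ∑ i : Fin r, ∑ j ∈ univ.filter fun j => i < j, (d - m i) * (d - m j))
      * B.det ^ r := by
  classical
  have hr0 : 0 < r := by omega
  have hd1 : d * (r - 1) + d = d * r := by
    conv_rhs => rw [← Nat.succ_pred_eq_of_pos hr0]
    rw [Nat.mul_succ]
    rfl
  set w : Fin r → ℕ := fun i => d - m i with hwdef
  have hwi : ∀ i, d - m i = w i := fun i => rfl
  have hSw : ∑ i, w i = d := hsum
  have hwm : ∀ i, m i + w i = d := fun i => by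
    rw [← hwi i]; have := hm i; omega
  have hSm : ∑ i, m i = d * (r - 1) := by
    have h1 : ∑ i, (m i + w i) = ∑ _i : Fin r, d := Finset.sum_congr rfl fun i _ => hwm i
    rw [Finset.sum_add_distrib, hSw, Finset.sum_const, Finset.card_univ, Fintype.card_fin,
      smul_eq_mul] at h1
    have h2 : r * d = d * r := Nat.mul_comm r d
    omega
  have hmul : ∀ i : Fin r, d * (i : ℕ) + d ≤ d * r := fun i => by
    have h1 : d * ((i : ℕ) + 1) ≤ d * r := Nat.mul_le_mul_left d i.isLt
    rw [Nat.mul_succ] at h1; exact h1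
  -- block decomposition of `Fin d` along the layout of `B = [C_r | ... | C_1]`
  choose bi bj hbj hbc using fun c : Fin d => S13.roff_exists w (c := (c : ℕ)) (by rw [hSw]; exact c.isLt)
  have hbd : ∀ i, S13.roff w i + w i ≤ d := fun i => by
    have := S13.roff_add_le w i; rw [hSw] at this; exact this
  have hblk : ∀ (c : Fin d) (i : Fin r),
      bi c = i ↔ (S13.roff w i ≤ (c : ℕ) ∧ (c : ℕ) < S13.roff w i + w i) := by
    intro c i
    constructor
    · rintro rfl; have := hbj c; have := hbc c; omega
    · rintro ⟨h1, h2⟩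
      have h3 := hbc c
      have h4 := hbj c
      have h5 : S13.roff w (bi c) + bj c = S13.roff w i + ((c : ℕ) - S13.roff w i) := by omega
      exact (S13.roff_unique w h4 (by omega) h5).1
  have hPcol : ∀ (i : Fin r) (c : Fin d), bi c ≠ i → S13.boff w i (bi c) + bj c < m i := by
    intro i c h
    have h1 := S13.boff_add_le w h
    rw [hSw] at h1
    have h2 := hbj c
    have h3 := hwm i
    omega
  have hloffm : ∀ i, S13.loff m i + m i ≤ d * (r - 1) := fun i => by
    have := S13.loff_add_le m i; rw [hSm] at this; exact this
  -- the two index bijections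
  obtain ⟨ρf, hρ⟩ : ∃ f : Fin r × Fin d → Fin (d * r),
      ∀ x, (f x : ℕ) = d * (x.1 : ℕ) + (x.2 : ℕ) :=
    ⟨fun x => ⟨d * (x.1 : ℕ) + (x.2 : ℕ), by have := hmul x.1; have := x.2.isLt; omega⟩,
      fun x => rfl⟩
  obtain ⟨φf, hφδ, hφP⟩ : ∃ f : Fin r × Fin d → Fin (d * r),
      (∀ x : Fin r × Fin d, bi x.2 = x.1 → (f x : ℕ) = d * (r - 1) + (x.2 : ℕ)) ∧
      (∀ x : Fin r × Fin d, bi x.2 ≠ x.1 →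
        (f x : ℕ) = S13.loff m x.1 + (S13.boff w x.1 (bi x.2) + bj x.2)) := by
    refine ⟨fun x => if h : bi x.2 = x.1 then
        ⟨d * (r - 1) + (x.2 : ℕ), by have := x.2.isLt; omega⟩
      else ⟨S13.loff m x.1 + (S13.boff w x.1 (bi x.2) + bj x.2), by
        have := hPcol x.1 x.2 h; have := hloffm x.1; omega⟩, ?_, ?_⟩
    · intro x h; simp only [dif_pos h]
    · intro x h; simp only [dif_neg h]
  have hφlt : ∀ x : Fin r × Fin d, bi x.2 ≠ x.1 → (φf x : ℕ) < d * (r - 1) := fun x h => by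
    rw [hφP x h]; have := hPcol x.1 x.2 h; have := hloffm x.1; omega
  have hρ' : ∀ (k : Fin r) (a : Fin d), (ρf (k, a) : ℕ) = d * (k : ℕ) + (a : ℕ) :=
    fun k a => hρ (k, a)
  have hφδ' : ∀ (i : Fin r) (c : Fin d), bi c = i → (φf (i, c) : ℕ) = d * (r - 1) + (c : ℕ) :=
    fun i c h => hφδ (i, c) h
  have hφP' : ∀ (i : Fin r) (c : Fin d), bi c ≠ i →
      (φf (i, c) : ℕ) = S13.loff m i + (S13.boff w i (bi c) + bj c) :=
    fun i c h => hφP (i, c) h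
  have hφlt' : ∀ (i : Fin r) (c : Fin d), bi c ≠ i → (φf (i, c) : ℕ) < d * (r - 1) :=
    fun i c h => hφlt (i, c) h
  have hρinj : Function.Injective ρf := by
    rintro ⟨i, c⟩ ⟨i', c'⟩ h
    have hv : (ρf (i, c) : ℕ) = (ρf (i', c') : ℕ) := by rw [h]
    rw [hρ' i c, hρ' i' c'] at hv
    obtain ⟨h1, h2⟩ := S13.nat_mul_add_inj c.isLt c'.isLt hv
    simp only [Prod.mk.injEq]
    exact ⟨Fin.ext h1, Fin.ext h2⟩
  have hφinj : Function.Injective φf := by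
    rintro ⟨i, c⟩ ⟨i', c'⟩ h
    have hv : (φf (i, c) : ℕ) = (φf (i', c') : ℕ) := by rw [h]
    by_cases h1 : bi c = i <;> by_cases h2 : bi c' = i'
    · rw [hφδ' i c h1, hφδ' i' c' h2] at hv
      have hc : c = c' := Fin.ext (by omega)
      subst hc
      simp only [Prod.mk.injEq]
      exact ⟨h1.symm.trans h2, trivial⟩
    · exfalso
      rw [hφδ' i c h1] at hv
      have := hφlt' i' c' h2
      omega
    · exfalso
      rw [hφδ' i' c' h2] at hv
      have := hφlt' i c h1
      omega
    · rw [hφP' i c h1, hφP' i' c' h2] at hv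
      obtain ⟨rfl, hv2⟩ := S13.loff_unique m (hPcol i c h1) (hPcol i' c' h2) hv
      obtain ⟨hbieq, hbjeq⟩ := S13.boff_unique w h1 h2 (hbj c) (hbj c') hv2
      have hc : c = c' := Fin.ext (by
        have e1 := hbc c; have e2 := hbc c'; rw [hbieq] at e1; omega)
      subst hc
      rfl
  have hcard : Fintype.card (Fin r × Fin d) = Fintype.card (Fin (d * r)) := by
    simp [mul_comm]
  have hρbij : Function.Bijective ρf :=
    (Fintype.bijective_iff_injective_and_card ρf).mpr ⟨hρinj, hcard⟩
  have hφbij : Function.Bijective φf :=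
    (Fintype.bijective_iff_injective_and_card φf).mpr ⟨hφinj, hcard⟩
  set ρe := Equiv.ofBijective ρf hρbij with hρedef
  set φe := Equiv.ofBijective φf hφbij with hφedef
  set σ : Equiv.Perm (Fin r × Fin d) := φe.trans ρe.symm with hσdef
  -- the matrices L and N
  set L : Matrix (Fin r × Fin d) (Fin r × Fin d) ℝ :=
    Matrix.of (fun x y => if x.1 = y.1 then B x.2 y.2 else 0) with hLdef
  set N : Matrix (Fin r × Fin d) (Fin r × Fin d) ℝ :=
    Matrix.of (fun x y => if x.2 = y.2 ∧ (bi y.2 = y.1 ∨ x.1 = y.1) then (1 : ℝ) else 0)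
    with hNdef
  set F : Matrix (Fin r × Fin d) (Fin r × Fin d) ℝ :=
    Matrix.of (fun x y => if x.2 = y.2 ∧ bi y.2 = y.1 ∧ x.1 ≠ y.1 then (1 : ℝ) else 0)
    with hFdef
  -- entries of B via C
  have hBC : ∀ (a c : Fin d), B a c = C (bi c) a ⟨bj c, hbj c⟩ := by
    intro a c
    have hlt : (∑ i' ∈ univ.filter fun i' => bi c < i', (d - m i'))
        + ((⟨bj c, hbj c⟩ : Fin (d - m (bi c))) : ℕ) < d := by
      show S13.roff w (bi c) + bj c < d
      have := hbc c; have := c.isLt; omega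
    have hy := hB (bi c) ⟨bj c, hbj c⟩ a hlt
    have hceq : c = (⟨(∑ i' ∈ univ.filter fun i' => bi c < i', (d - m i'))
        + ((⟨bj c, hbj c⟩ : Fin (d - m (bi c))) : ℕ), hlt⟩ : Fin d) := by
      apply Fin.ext
      show (c : ℕ) = S13.roff w (bi c) + bj c
      exact hbc c
    exact (congrArg (B a) hceq).trans hy
  -- the factorization  M.submatrix ρe φe = L * N
  have hMeq : M.submatrix ρe φe = L * N := by
    ext x y
    obtain ⟨k, a⟩ := x
    obtain ⟨i, c⟩ := y
    rw [Matrix.submatrix_apply, Matrix.mul_apply]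
    show M (ρf (k, a)) (φf (i, c)) = _
    have hRHS : ∑ z : Fin r × Fin d, L (k, a) z * N z (i, c)
        = if bi c = i ∨ k = i then B a c else 0 := by
      rw [Fintype.sum_prod_type]
      rw [Finset.sum_eq_single k]
      · have h1 : ∀ b : Fin d, L (k, a) (k, b) * N (k, b) (i, c)
            = B a b * (if b = c ∧ (bi c = i ∨ k = i) then (1 : ℝ) else 0) := by
          intro b
          rw [hLdef, hNdef]
          simp only [Matrix.of_apply, eq_self_iff_true, if_true]
        rw [Finset.sum_congr rfl fun b _ => h1 b]
        by_cases hQ : bi c = i ∨ k = i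
        · simp only [hQ, and_true, mul_ite, mul_one, mul_zero, if_pos]
          rw [Finset.sum_ite_eq' Finset.univ c (fun b => B a b), if_pos (Finset.mem_univ c)]
        · simp only [hQ, and_false, if_false, mul_zero, Finset.sum_const_zero]
      · intro k' _ hk'
        apply Finset.sum_eq_zero
        intro b _
        rw [hLdef]
        simp only [Matrix.of_apply, if_neg (fun hh : k = k' => hk' hh.symm)]
        rw [zero_mul]
      · intro hk; exact absurd (Finset.mem_univ k) hk
    rw [hRHS]
    have hrow : d * (k : ℕ) + (a : ℕ) < d * r := by
      have := hmul k; have := a.isLt; omega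
    have hx : ρf (k, a) = ⟨d * (k : ℕ) + (a : ℕ), hrow⟩ := Fin.ext (hρ' k a)
    by_cases h : bi c = i
    · have hcol : d * (r - 1) + (c : ℕ) < d * r := by have := c.isLt; omega
      have hy : φf (i, c) = ⟨d * (r - 1) + (c : ℕ), hcol⟩ := Fin.ext (hφδ' i c h)
      rw [hx, hy, hMδ k a c hrow hcol, if_pos (Or.inl h)]
    · have hjlt : S13.boff w i (bi c) + bj c < m i := hPcol i c h
      have hcol : (∑ i' ∈ univ.filter fun i' => i' < i, m i')
          + ((⟨S13.boff w i (bi c) + bj c, hjlt⟩ : Fin (m i)) : ℕ) < d * r := by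
        show S13.loff m i + (S13.boff w i (bi c) + bj c) < d * r
        have := hloffm i; omega
      have hy : φf (i, c) = ⟨(∑ i' ∈ univ.filter fun i' => i' < i, m i')
          + ((⟨S13.boff w i (bi c) + bj c, hjlt⟩ : Fin (m i)) : ℕ), hcol⟩ := by
        apply Fin.ext
        rw [hφP' i c h]
        rfl
      rw [hx, hy, hMP i ⟨S13.boff w i (bi c) + bj c, hjlt⟩ k a hrow hcol]
      by_cases hk : k = i
      · rw [if_pos hk, if_pos (Or.inr hk)]
        have hBiC : Bi i a ⟨S13.boff w i (bi c) + bj c, hjlt⟩ = C (bi c) a ⟨bj c, hbj c⟩ :=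
          hBi i (bi c) h ⟨bj c, hbj c⟩ a hjlt
        rw [hBiC, ← hBC a c]
      · rw [if_neg hk, if_neg (by rintro (hc | hc); exacts [h hc, hk hc])]
  -- N = 1 + F and F² = 0
  have hNsplit : N = 1 + F := by
    ext x y
    obtain ⟨k, b⟩ := x
    obtain ⟨i, c⟩ := y
    rw [hNdef, hFdef]
    simp only [Matrix.add_apply, Matrix.one_apply, Matrix.of_apply, Prod.mk.injEq]
    by_cases h1 : k = i <;> by_cases h2 : b = c <;> by_cases h3 : bi c = i <;>
      simp [h1, h2, h3]
  have hF2 : F * F = 0 := by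
    ext x y
    obtain ⟨k, b⟩ := x
    obtain ⟨i, c⟩ := y
    rw [Matrix.mul_apply, Matrix.zero_apply]
    apply Finset.sum_eq_zero
    rintro ⟨j, e⟩ -
    rw [hFdef]
    simp only [Matrix.of_apply]
    by_cases h1 : b = e ∧ bi e = j ∧ k ≠ j
    · by_cases h2 : e = c ∧ bi c = i ∧ j ≠ i
      · exfalso
        obtain ⟨he, hj, -⟩ := h1
        obtain ⟨rfl, hi, hji⟩ := h2
        exact hji (hj.symm.trans hi)
      · rw [if_neg h2, mul_zero]
    · rw [if_neg h1, zero_mul]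
  have hdetN : N.det = 1 := by
    rw [hNsplit]
    exact S13.det_one_add_sq_zero F hF2
  have hdetL : L.det = B.det ^ r := by
    have hLsub : L = (Matrix.blockDiagonal (fun _ : Fin r => B)).submatrix
        (Equiv.prodComm (Fin r) (Fin d)) (Equiv.prodComm (Fin r) (Fin d)) := by
      ext x y
      rw [hLdef]
      simp only [Matrix.submatrix_apply, Matrix.of_apply, Equiv.prodComm_apply,
        Matrix.blockDiagonal_apply, Prod.snd_swap, Prod.fst_swap]
    rw [hLsub, Matrix.det_submatrix_equiv_self, Matrix.det_blockDiagonal,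
      Finset.prod_const, Finset.card_univ, Fintype.card_fin]
  -- determinant chain
  have hperm : M.submatrix ρe φe = (M.submatrix ρe ρe).submatrix id σ := by
    ext x y
    simp only [Matrix.submatrix_apply, hσdef, Equiv.trans_apply, id_eq,
      Equiv.apply_symm_apply]
  have hdetchain : B.det ^ r = ((Equiv.Perm.sign σ : ℤ) : ℝ) * M.det := by
    calc B.det ^ r = L.det * N.det := by rw [hdetL, hdetN, mul_one]
    _ = (L * N).det := (Matrix.det_mul L N).symm
    _ = (M.submatrix ρe φe).det := by rw [hMeq]
    _ = ((M.submatrix ρe ρe).submatrix id σ).det := by rw [hperm]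
    _ = ((Equiv.Perm.sign σ : ℤ) : ℝ) * (M.submatrix ρe ρe).det := by
        rw [Matrix.det_permute' σ]
        try norm_cast
    _ = ((Equiv.Perm.sign σ : ℤ) : ℝ) * M.det := by rw [Matrix.det_submatrix_equiv_self]
  -- the permutation on `Fin (d*r)` and its inversion count
  set ψ : Equiv.Perm (Fin (d * r)) := (ρe.symm.trans σ).trans ρe with hψdef
  have hsψ : Equiv.Perm.sign σ = Equiv.Perm.sign ψ :=
    (Equiv.Perm.sign_symm_trans_trans σ ρe).symm
  have hψval : ∀ z, ψ z = φf (ρe.symm z) := by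
    intro z
    simp only [hψdef, hσdef, Equiv.trans_apply, Equiv.apply_symm_apply]
    rfl
  set Ic := ((Equiv.Perm.finPairsLT (d * r)).filter fun x => ψ x.1 ≤ ψ x.2).card with hIdef
  have hsignpow : Equiv.Perm.sign ψ = (-1 : ℤˣ) ^ Ic := by
    rw [S13.sign_eq_signAux, S13.signAux_eq_pow]
  have hIcount : Ic = (univ.filter fun z : (Fin r × Fin d) × (Fin r × Fin d) =>
      ρf z.1 < ρf z.2 ∧ φf z.2 ≤ φf z.1).card := by
    rw [hIdef]
    refine Finset.card_bij (fun x _ => (ρe.symm x.2, ρe.symm x.1)) ?_ ?_ ?_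
    · intro x hx
      rw [Finset.mem_filter, Equiv.Perm.mem_finPairsLT] at hx
      obtain ⟨hlt, hle⟩ := hx
      rw [Finset.mem_filter]
      refine ⟨Finset.mem_univ _, ?_, ?_⟩
      · show ρf (ρe.symm x.2) < ρf (ρe.symm x.1)
        have e1 : ρf (ρe.symm x.2) = x.2 := ρe.apply_symm_apply x.2
        have e2 : ρf (ρe.symm x.1) = x.1 := ρe.apply_symm_apply x.1
        rw [e1, e2]; exact hlt
      · show φf (ρe.symm x.1) ≤ φf (ρe.symm x.2)
        rw [← hψval, ← hψval]; exact hle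
    · rintro ⟨x1, x2⟩ hx ⟨y1, y2⟩ hy h
      simp only [Prod.mk.injEq] at h
      obtain ⟨h1, h2⟩ := h
      have e1 : x2 = y2 := ρe.symm.injective h1
      have e2 : x1 = y1 := ρe.symm.injective h2
      subst e1; subst e2; rfl
    · intro z hz
      rw [Finset.mem_filter] at hz
      obtain ⟨-, hz1, hz2⟩ := hz
      refine ⟨⟨ρe z.2, ρe z.1⟩, ?_, ?_⟩
      · rw [Finset.mem_filter, Equiv.Perm.mem_finPairsLT]
        constructor
        · show ρf z.1 < ρf z.2
          exact hz1
        · show ψ (ρe z.2) ≤ ψ (ρe z.1)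
          rw [hψval, hψval, Equiv.symm_apply_apply, Equiv.symm_apply_apply]
          exact hz2
      · simp only [Equiv.symm_apply_apply]
  -- order facts
  have hρlt : ∀ x y : Fin r × Fin d, ρf x < ρf y ↔
      ((x.1 : ℕ) < (y.1 : ℕ) ∨ (x.1 = y.1 ∧ (x.2 : ℕ) < (y.2 : ℕ))) := by
    intro x y
    rw [Fin.lt_def, hρ x, hρ y, S13.nat_mul_add_lt_iff x.2.isLt y.2.isLt]
    constructor
    · rintro (h | ⟨h1, h2⟩)
      · exact Or.inl h
      · exact Or.inr ⟨Fin.ext h1, h2⟩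
    · rintro (h | ⟨h1, h2⟩)
      · exact Or.inl h
      · exact Or.inr ⟨by rw [h1], h2⟩
  have hρlt' : ∀ (k : Fin r) (a : Fin d) (k' : Fin r) (a' : Fin d),
      ρf (k, a) < ρf (k', a') ↔ ((k : ℕ) < (k' : ℕ) ∨ (k = k' ∧ (a : ℕ) < (a' : ℕ))) :=
    fun k a k' a' => hρlt (k, a) (k', a')
  have hPP : ∀ (i : Fin r) (c : Fin d) (i' : Fin r) (c' : Fin d), bi c ≠ i → bi c' ≠ i' →
      ((i : ℕ) < (i' : ℕ) ∨ (i = i' ∧ (c : ℕ) < (c' : ℕ))) →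
      S13.loff m i + (S13.boff w i (bi c) + bj c)
        < S13.loff m i' + (S13.boff w i' (bi c') + bj c') := by
    intro i c i' c' h h' hlex
    rcases hlex with h1 | ⟨rfl, h2⟩
    · have h3 := S13.loff_succ_le m (Fin.lt_def.mpr h1)
      have h4 := hPcol i c h
      omega
    · by_cases hb : bi c = bi c'
      · rw [hb]
        have e1 := hbc c; have e2 := hbc c'
        rw [hb] at e1
        omega
      · have hlt2 : bi c' < bi c := by
          rcases lt_trichotomy (bi c) (bi c') with h3 | h3 | h3
          · exfalso
            have h4 := S13.roff_succ_le w h3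
            have e1 := hbc c; have e2 := hbc c'; have e3 := hbj c'
            omega
          · exact absurd h3 hb
          · exact h3
        have h5 := S13.boff_succ_le w hlt2 h
        have h6 := hbj c
        omega
  -- block cardinalities
  have hblkcard : ∀ i' : Fin r, ((univ : Finset (Fin d)).filter fun c' => bi c' = i').card = w i' := by
    intro i'
    rw [Finset.filter_congr (fun c' _ => hblk c' i'), S13.count_val_Ico (hbd i')]
    omega
  have hblkcard2 : ∀ (i' : Fin r) (c : Fin d), bi c = i' →
      ((univ : Finset (Fin d)).filter fun c' => bi c' = i' ∧ (c : ℕ) < (c' : ℕ)).card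
        = S13.roff w i' + w i' - ((c : ℕ) + 1) := by
    intro i' c h
    have hcin := (hblk c i').mp h
    have hfc : ((univ : Finset (Fin d)).filter fun c' => bi c' = i' ∧ (c : ℕ) < (c' : ℕ))
        = (univ : Finset (Fin d)).filter
          fun c' : Fin d => (c : ℕ) + 1 ≤ (c' : ℕ) ∧ (c' : ℕ) < S13.roff w i' + w i' := by
      refine Finset.filter_congr fun c' _ => ?_
      constructor
      · rintro ⟨h1, h2⟩
        have := (hblk c' i').mp h1
        omega
      · rintro ⟨h1, h2⟩
        exact ⟨(hblk c' i').mpr ⟨by omega, h2⟩, by omega⟩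
    rw [hfc, S13.count_val_Ico (hbd i')]
  have hgt : ∀ x : Fin r × Fin d,
      (univ.filter fun y : Fin r × Fin d => ρf x < ρf y).card
        = d * r - ((d * (x.1 : ℕ) + (x.2 : ℕ)) + 1) := by
    intro x
    have h1 : (univ.filter fun y : Fin r × Fin d => ρf x < ρf y).card
        = ((univ : Finset (Fin (d * r))).filter fun z => ρf x < z).card :=
      S13.card_filter_equiv ρe (fun z => ρf x < z)
    have h2 : ((univ : Finset (Fin (d * r))).filter fun z => ρf x < z)
        = (univ : Finset (Fin (d * r))).filter
          fun z : Fin (d * r) => ((ρf x : ℕ) + 1 ≤ (z : ℕ) ∧ (z : ℕ) < d * r) := by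
      refine Finset.filter_congr fun z _ => ?_
      rw [Fin.lt_def]
      have := z.isLt
      omega
    rw [h1, h2, S13.count_val_Ico (le_refl (d * r)), hρ x]
  have hgt' : ∀ (k : Fin r) (a : Fin d),
      (univ.filter fun y : Fin r × Fin d => ρf (k, a) < ρf y).card
        = d * r - ((d * (k : ℕ) + (a : ℕ)) + 1) := fun k a => hgt (k, a)
  have hδgt : ∀ i : Fin r,
      (univ.filter fun y : Fin r × Fin d => bi y.2 = y.1 ∧ i < y.1).card = S13.roff w i := by
    intro i
    rw [S13.card_filter_prod]
    have h1 : ∀ i' : Fin r, ((univ : Finset (Fin d)).filter fun c' => bi c' = i' ∧ i < i').card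
        = if i < i' then w i' else 0 := by
      intro i'
      by_cases h' : i < i'
      · rw [if_pos h', Finset.filter_congr (fun c' _ => and_iff_left h')]
        exact hblkcard i'
      · rw [if_neg h']
        apply Finset.card_eq_zero.mpr
        rw [Finset.filter_eq_empty_iff]
        rintro c' - ⟨-, hcc⟩
        exact h' hcc
    rw [Finset.sum_congr rfl fun i' _ => h1 i', ← Finset.sum_filter]
    rfl
  have hδρgt : ∀ (i : Fin r) (c : Fin d), bi c = i →
      (univ.filter fun y : Fin r × Fin d => ρf (i, c) < ρf y ∧ bi y.2 = y.1).card
        = S13.roff w i + (S13.roff w i + w i - ((c : ℕ) + 1)) := by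
    intro i c hc
    rw [S13.card_filter_prod]
    have h1 : ∀ i' : Fin r, ((univ : Finset (Fin d)).filter
        fun c' => ρf (i, c) < ρf (i', c') ∧ bi c' = i').card
        = (if i < i' then w i' else 0)
          + (if i' = i then S13.roff w i + w i - ((c : ℕ) + 1) else 0) := by
      intro i'
      rcases lt_trichotomy i i' with h' | h' | h'
      · rw [if_pos h', if_neg (ne_of_gt h'), add_zero]
        have hfc : ((univ : Finset (Fin d)).filter
            fun c' => ρf (i, c) < ρf (i', c') ∧ bi c' = i')
            = (univ : Finset (Fin d)).filter fun c' => bi c' = i' := by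
          refine Finset.filter_congr fun c' _ => ?_
          constructor
          · rintro ⟨-, h2⟩; exact h2
          · intro h2
            exact ⟨(hρlt' i c i' c').mpr (Or.inl (Fin.lt_def.mp h')), h2⟩
        rw [hfc]
        exact hblkcard i'
      · subst h'
        rw [if_neg (lt_irrefl i), if_pos rfl, zero_add]
        have hfc : ((univ : Finset (Fin d)).filter
            fun c' => ρf (i, c) < ρf (i, c') ∧ bi c' = i)
            = (univ : Finset (Fin d)).filter fun c' => bi c' = i ∧ (c : ℕ) < (c' : ℕ) := by
          refine Finset.filter_congr fun c' _ => ?_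
          constructor
          · rintro ⟨h2, h3⟩
            rcases (hρlt' i c i c').mp h2 with h4 | ⟨-, h4⟩
            · omega
            · exact ⟨h3, h4⟩
          · rintro ⟨h2, h3⟩
            exact ⟨(hρlt' i c i c').mpr (Or.inr ⟨rfl, h3⟩), h2⟩
        rw [hfc]
        exact hblkcard2 i c hc
      · rw [if_neg (lt_asymm h'), if_neg (ne_of_lt h'), add_zero]
        apply Finset.card_eq_zero.mpr
        rw [Finset.filter_eq_empty_iff]
        rintro c' - ⟨h2, -⟩
        have h5 := Fin.lt_def.mp h'
        rcases (hρlt' i c i' c').mp h2 with h4 | ⟨h4, -⟩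
        · omega
        · have h6 : (i : ℕ) = (i' : ℕ) := by rw [h4]
          omega
    rw [Finset.sum_congr rfl fun i' _ => h1 i', Finset.sum_add_distrib, ← Finset.sum_filter,
      Finset.sum_ite_eq' Finset.univ i
        (fun _ => S13.roff w i + w i - ((c : ℕ) + 1)),
      if_pos (Finset.mem_univ i)]
    rfl
  -- per-x count
  have hcount : ∀ (i : Fin r) (c : Fin d),
      (univ.filter fun y : Fin r × Fin d => ρf (i, c) < ρf y ∧ φf y ≤ φf (i, c)).card
        = if bi c = i then d * r - (d * (i : ℕ) + (w i + S13.roff w i)) else 0 := by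
    intro i c
    by_cases hδc : bi c = i
    · rw [if_pos hδc]
      have hsplit : (univ.filter fun y : Fin r × Fin d => ρf (i, c) < ρf y ∧ φf y ≤ φf (i, c))
          = (univ.filter fun y : Fin r × Fin d => ρf (i, c) < ρf y ∧ ¬ bi y.2 = y.1)
            ∪ (univ.filter fun y : Fin r × Fin d => bi y.2 = y.1 ∧ i < y.1) := by
        rw [← Finset.filter_or]
        refine Finset.filter_congr ?_
        rintro ⟨i', c'⟩ -
        dsimp only
        constructor
        · rintro ⟨h1, h2⟩
          by_cases hδ' : bi c' = i'
          · right
            refine ⟨hδ', ?_⟩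
            have h2v : (φf (i', c') : ℕ) ≤ (φf (i, c) : ℕ) := Fin.le_def.mp h2
            rw [hφδ' i' c' hδ', hφδ' i c hδc] at h2v
            rcases (hρlt' i c i' c').mp h1 with h3 | ⟨h3, h4⟩
            · exact Fin.lt_def.mpr h3
            · exfalso
              have : (i : ℕ) = (i' : ℕ) := by rw [h3]
              omega
          · left; exact ⟨h1, hδ'⟩
        · rintro (⟨h1, h2⟩ | ⟨h1, h2⟩)
          · refine ⟨h1, ?_⟩
            apply Fin.le_def.mpr
            have h3 := hφlt' i' c' h2
            rw [hφδ' i c hδc]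
            omega
          · have h3 := (hblk c' i').mp h1
            have h4 := S13.roff_succ_le w h2
            have h5 := hbc c
            rw [hδc] at h5
            constructor
            · exact (hρlt' i c i' c').mpr (Or.inl (Fin.lt_def.mp h2))
            · apply Fin.le_def.mpr
              rw [hφδ' i' c' h1, hφδ' i c hδc]
              omega
      have hdisj : Disjoint
          (univ.filter fun y : Fin r × Fin d => ρf (i, c) < ρf y ∧ ¬ bi y.2 = y.1)
          (univ.filter fun y : Fin r × Fin d => bi y.2 = y.1 ∧ i < y.1) := by
        rw [Finset.disjoint_left]
        rintro y hy1 hy2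
        rw [Finset.mem_filter] at hy1 hy2
        exact hy1.2.2 hy2.2.1
      rw [hsplit, Finset.card_union_of_disjoint hdisj]
      have hA := hgt' i c
      have hB' := hδρgt i c hδc
      have hC' := hδgt i
      have hpart := Finset.card_filter_add_card_filter_not
        (s := univ.filter fun y : Fin r × Fin d => ρf (i, c) < ρf y)
        (p := fun y => bi y.2 = y.1)
      rw [Finset.filter_filter, Finset.filter_filter] at hpart
      have e1 := hbc c
      rw [hδc] at e1
      have e2 := hbj c
      rw [hδc] at e2
      have e3 := hbd i
      have e4 := hmul i
      have e5 := c.isLt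
      omega
    · rw [if_neg hδc]
      apply Finset.card_eq_zero.mpr
      rw [Finset.filter_eq_empty_iff]
      rintro ⟨i', c'⟩ - hy
      obtain ⟨h1, h2⟩ := hy
      have h9 : (φf (i', c') : ℕ) ≤ (φf (i, c) : ℕ) := Fin.le_def.mp h2
      by_cases hδ' : bi c' = i'
      · have h3 := hφδ' i' c' hδ'
        have h4 := hφlt' i c hδc
        omega
      · have hlex := (hρlt' i c i' c').mp h1
        have h6 := hPP i c i' c' hδc hδ' hlex
        have h7 := hφP' i c hδc
        have h8 := hφP' i' c' hδ'
        omega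
  -- total count
  have hIval : Ic = ∑ i : Fin r, w i * (d * r - (d * (i : ℕ) + (w i + S13.roff w i))) := by
    rw [hIcount, S13.card_filter_prod, Fintype.sum_prod_type]
    refine Finset.sum_congr rfl fun i _ => ?_
    rw [Finset.sum_congr rfl fun c (_ : c ∈ univ) => hcount i c, ← Finset.sum_filter,
      Finset.sum_const, smul_eq_mul, hblkcard i]
  -- the exponent in the statement
  have htexp : (∑ i : Fin r, (r - 1 - (i : ℕ)) * d * (d - m i))
      + ∑ i : Fin r, ∑ j ∈ univ.filter (fun j => i < j), (d - m i) * (d - m j)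
      = ∑ i : Fin r, ((r - 1 - (i : ℕ)) * d * w i + w i * S13.roff w i) := by
    simp only [hwi]
    rw [← Finset.sum_add_distrib]
    refine Finset.sum_congr rfl fun i _ => ?_
    congr 1
    rw [← Finset.mul_sum]
    rfl
  -- parity
  have hpar : Even (Ic + ∑ i : Fin r, ((r - 1 - (i : ℕ)) * d * w i + w i * S13.roff w i)) := by
    rw [hIval, ← Finset.sum_add_distrib]
    have key : ∀ i : Fin r, Even ((w i * (d * r - (d * (i : ℕ) + (w i + S13.roff w i)))
        + ((r - 1 - (i : ℕ)) * d * w i + w i * S13.roff w i)) + w i * (d + 1)) := by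
      intro i
      have h1 : (i : ℕ) + (r - 1 - (i : ℕ)) + 1 = r := by have := i.isLt; omega
      have h2 : d * r = d * (i : ℕ) + d * (r - 1 - (i : ℕ)) + d := by
        conv_lhs => rw [← h1]
        ring
      have h3 := hbd i
      have h4 : w i * (d * r - (d * (i : ℕ) + (w i + S13.roff w i)))
          + ((r - 1 - (i : ℕ)) * d * w i + w i * S13.roff w i) + w i * (d + 1)
          = w i * ((d * r - (d * (i : ℕ) + (w i + S13.roff w i))) + d * (r - 1 - (i : ℕ))
            + S13.roff w i + (d + 1)) := by
        rw [show (r - 1 - (i : ℕ)) * d * w i = w i * (d * (r - 1 - (i : ℕ))) by ring]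
        ring
      rw [h4]
      rcases Nat.even_or_odd (w i) with he | ho
      · exact he.mul_right _
      · apply Even.mul_left
        rw [Nat.even_iff]
        rw [Nat.odd_iff] at ho
        omega
    have hsum_even : Even (∑ i : Fin r, ((w i * (d * r - (d * (i : ℕ) + (w i + S13.roff w i)))
        + ((r - 1 - (i : ℕ)) * d * w i + w i * S13.roff w i)) + w i * (d + 1))) := by
      apply Finset.even_sum
      intro i _
      exact key i
    rw [Finset.sum_add_distrib, ← Finset.sum_mul, hSw] at hsum_even
    have hdd : Even (d * (d + 1)) := Nat.even_mul_succ_self d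
    rw [Nat.even_iff] at hsum_even hdd ⊢
    omega
  have hpow : (-1 : ℝ) ^ Ic
      = (-1 : ℝ) ^ (∑ i : Fin r, ((r - 1 - (i : ℕ)) * d * w i + w i * S13.roff w i)) := by
    have h1 : (-1 : ℝ) ^ (Ic + ∑ i : Fin r, ((r - 1 - (i : ℕ)) * d * w i + w i * S13.roff w i))
        = 1 := Even.neg_one_pow hpar
    rw [pow_add] at h1
    have h2 : ((-1 : ℝ) ^ (∑ i : Fin r, ((r - 1 - (i : ℕ)) * d * w i + w i * S13.roff w i)))
        * ((-1 : ℝ) ^ (∑ i : Fin r, ((r - 1 - (i : ℕ)) * d * w i + w i * S13.roff w i))) = 1 := by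
      rw [← pow_add]
      exact Even.neg_one_pow ⟨_, rfl⟩
    calc (-1 : ℝ) ^ Ic
        = (-1 : ℝ) ^ Ic * (((-1 : ℝ) ^ (∑ i : Fin r, ((r - 1 - (i : ℕ)) * d * w i
            + w i * S13.roff w i))) * ((-1 : ℝ) ^ (∑ i : Fin r, ((r - 1 - (i : ℕ)) * d * w i
            + w i * S13.roff w i)))) := by rw [h2, mul_one]
      _ = ((-1 : ℝ) ^ Ic * ((-1 : ℝ) ^ (∑ i : Fin r, ((r - 1 - (i : ℕ)) * d * w i
            + w i * S13.roff w i)))) * ((-1 : ℝ) ^ (∑ i : Fin r, ((r - 1 - (i : ℕ)) * d * w i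
            + w i * S13.roff w i))) := by ring
      _ = (-1 : ℝ) ^ (∑ i : Fin r, ((r - 1 - (i : ℕ)) * d * w i + w i * S13.roff w i)) := by
            rw [h1, one_mul]
  have hsignval : ((Equiv.Perm.sign σ : ℤ) : ℝ)
      = (-1 : ℝ) ^ (∑ i : Fin r, ((r - 1 - (i : ℕ)) * d * w i + w i * S13.roff w i)) := by
    rw [hsψ, hsignpow]
    rw [show (((((-1 : ℤˣ) ^ Ic) : ℤˣ) : ℤ) : ℝ) = (-1 : ℝ) ^ Ic by
      rw [Units.val_pow_eq_pow_val]
      push_cast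
      rfl]
    exact hpow
  have hs2 : ((Equiv.Perm.sign σ : ℤ) : ℝ) * ((Equiv.Perm.sign σ : ℤ) : ℝ) = 1 := by
    rw [← Int.cast_mul, ← Units.val_mul, Int.units_mul_self, Units.val_one, Int.cast_one]
  have hfinal : M.det = ((Equiv.Perm.sign σ : ℤ) : ℝ) * B.det ^ r := by
    rw [hdetchain, ← mul_assoc, hs2, one_mul]
  rw [hfinal, hsignval, htexp]
end
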